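/- arXiv:math/0506250 — 7 statements merged into one kernel-verified Lean document; each statement's English description precedes it below -/
import Mathlib

section
/- For every n ∈ ℕ, the set R'_n is an equivalence relation on X contained in R_n; it is a compact subset of X × X which is relatively open (indeed clopen) in R_n with the subspace topology from X × X; and R'_n ⊆ R'_{n+1}. -/
/-!
A Bratteli diagram `B` has finite nonempty vertex sets `V n` (n ≥ 0), `V 0` a singleton,
and finite nonempty edge sets; we index edges so that `E n` is the set of edges from
level `n` to level `n + 1` (i.e. the paper's `E_{n+1}`), with surjective source map
`src n : E n → V n` and range map `rng n : E n → V (n + 1)` having nonempty fibers.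
Correspondingly, an infinite path `x` is a sequence `x 0, x 1, x 2, …` where `x n`
is the paper's `(n+1)`-th edge `x_{n+1}`; all of the paper's `1`-indexed objects
(`λ^{ij}_n`, `R_n`, `R'_n`) are re-indexed accordingly below.
-/
structure Bratteli where
  V : ℕ → Type
  E : ℕ → Type
  finV : ∀ n, Finite (V n)
  neV : ∀ n, Nonempty (V n)
  subsingletonV0 : Subsingleton (V 0)
  finE : ∀ n, Finite (E n)
  neE : ∀ n, Nonempty (E n)
  src : ∀ n, E n → V n
  rng : ∀ n, E n → V (n + 1)
  src_surjective : ∀ n, Function.Surjective (src n)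
  rng_surjective : ∀ n, Function.Surjective (rng n)

namespace Bratteli

/-- Each edge set carries the discrete topology. -/
instance (B : Bratteli) (n : ℕ) : TopologicalSpace (B.E n) := ⊥

instance (B : Bratteli) (n : ℕ) : DiscreteTopology (B.E n) := ⟨rfl⟩

instance (B : Bratteli) (n : ℕ) : Finite (B.E n) := B.finE n

/-- The infinite path space of a Bratteli diagram, topologized as a subspace of the
product of the discrete spaces `E n`. -/
abbrev Path (B : Bratteli) : Type :=
  {x : ∀ n, B.E n // ∀ n, B.rng n (x n) = B.src (n + 1) (x (n + 1))}

end Bratteli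

/-- An equivalence relation on `X`, viewed as a subset of `X × X`. -/
def IsEquivSetRel {X : Type*} (R : Set (X × X)) : Prop :=
  (∀ x, (x, x) ∈ R) ∧ (∀ x y, (x, y) ∈ R → (y, x) ∈ R) ∧
    (∀ x y z, (x, y) ∈ R → (y, z) ∈ R → (x, z) ∈ R)

/-- An ordered Bratteli diagram: each range fiber `rng⁻¹(v)` carries a linear order,
encoded as a relation `le` which is a linear order on each fiber and only relates
edges in a common fiber. -/
structure OrderedBratteli extends Bratteli where
  le : ∀ n, E n → E n → Prop
  le_rng : ∀ (n : ℕ) (e₁ e₂ : E n), le n e₁ e₂ → rng n e₁ = rng n e₂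
  le_refl : ∀ (n : ℕ) (e : E n), le n e e
  le_trans : ∀ (n : ℕ) (e₁ e₂ e₃ : E n), le n e₁ e₂ → le n e₂ e₃ → le n e₁ e₃
  le_antisymm : ∀ (n : ℕ) (e₁ e₂ : E n), le n e₁ e₂ → le n e₂ e₁ → e₁ = e₂
  le_total : ∀ (n : ℕ) (e₁ e₂ : E n), rng n e₁ = rng n e₂ → le n e₁ e₂ ∨ le n e₂ e₁

namespace OrderedBratteli

/-- An edge is maximal if it is the largest element of its range fiber. -/
def IsMaxEdge (B : OrderedBratteli) {n : ℕ} (e : B.E n) : Prop :=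
  ∀ e' : B.E n, B.rng n e' = B.rng n e → B.le n e' e

/-- An edge is minimal if it is the smallest element of its range fiber. -/
def IsMinEdge (B : OrderedBratteli) {n : ℕ} (e : B.E n) : Prop :=
  ∀ e' : B.E n, B.rng n e' = B.rng n e → B.le n e e'

end OrderedBratteli

attribute [local instance] Classical.propDecidable

variable (B₁ B₂ : OrderedBratteli)

/-- `lam00 B₁ B₂ x n` is the paper's `λ^{00}_{n+1}(x)` (with `true = 1`, `false = 0`). -/
noncomputable def lam00 (x : B₁.Path × B₂.Path) : ℕ → Bool
  | 0 => if B₁.IsMaxEdge (x.1.val 0) then true else false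
  | n + 1 =>
    if B₁.IsMaxEdge (x.1.val (n + 1)) then
      (if B₂.IsMaxEdge (x.2.val (n + 1)) then lam00 x n else true)
    else false

/-- `lam01 B₁ B₂ x n` is the paper's `λ^{01}_{n+1}(x)`. -/
noncomputable def lam01 (x : B₁.Path × B₂.Path) : ℕ → Bool
  | 0 => if B₂.IsMinEdge (x.2.val 0) then true else false
  | n + 1 =>
    if B₂.IsMinEdge (x.2.val (n + 1)) then
      (if B₁.IsMaxEdge (x.1.val (n + 1)) then lam01 x n else true)
    else false

/-- `lam11 B₁ B₂ x n` is the paper's `λ^{11}_{n+1}(x)`. -/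
noncomputable def lam11 (x : B₁.Path × B₂.Path) : ℕ → Bool
  | 0 => if B₁.IsMinEdge (x.1.val 0) then true else false
  | n + 1 =>
    if B₁.IsMinEdge (x.1.val (n + 1)) then
      (if B₂.IsMinEdge (x.2.val (n + 1)) then lam11 x n else true)
    else false

/-- `lam10 B₁ B₂ x n` is the paper's `λ^{10}_{n+1}(x)`. -/
noncomputable def lam10 (x : B₁.Path × B₂.Path) : ℕ → Bool
  | 0 => if B₂.IsMaxEdge (x.2.val 0) then true else false
  | n + 1 =>
    if B₂.IsMaxEdge (x.2.val (n + 1)) then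
      (if B₁.IsMinEdge (x.1.val (n + 1)) then lam10 x n else true)
    else false

/-- `lam B₁ B₂ i j x n` is the paper's `λ^{ij}_{n+1}(x)`, for `(i,j) ∈ {0,1}²`
(`false = 0`, `true = 1`). -/
noncomputable def lam : Bool → Bool → (B₁.Path × B₂.Path) → ℕ → Bool
  | false, false => lam00 B₁ B₂
  | false, true => lam01 B₁ B₂
  | true, true => lam11 B₁ B₂
  | true, false => lam10 B₁ B₂

/-- The paper's relation `R_n` on `X = X₁ × X₂`: two pairs of paths are related iff
their edges agree at every level `m > n` of the paper, i.e. at every index `m ≥ n`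
in our indexing. -/
def RRel (n : ℕ) : Set ((B₁.Path × B₂.Path) × (B₁.Path × B₂.Path)) :=
  {p | ∀ m, n ≤ m → p.1.1.val m = p.2.1.val m ∧ p.1.2.val m = p.2.2.val m}

/-- `RRel' B₁ B₂ n` is the paper's `R'_{n+1}`: pairs in `R_{n+1}` on which all four
functions `λ^{ij}_{n+1}` agree. -/
noncomputable def RRel' (n : ℕ) : Set ((B₁.Path × B₂.Path) × (B₁.Path × B₂.Path)) :=
  {p ∈ RRel B₁ B₂ (n + 1) | ∀ i j : Bool, lam B₁ B₂ i j p.1 n = lam B₁ B₂ i j p.2 n}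

/-!
STATEMENT 5 (the paper's Lemma 2.2). For every `n`, `R'_{n+1}` (= `RRel' B₁ B₂ n`) is
an equivalence relation contained in `R_{n+1}` (= `RRel B₁ B₂ (n+1)`); it is a compact
subset of `X × X` which is clopen in `R_{n+1}` with the subspace topology from
`X × X`; and `R'_{n+1} ⊆ R'_{n+2}`.
-/
instance (B : Bratteli) : CompactSpace B.Path := by
  have hcl : IsClosed {x : ∀ n, B.E n | ∀ n, B.rng n (x n) = B.src (n + 1) (x (n + 1))} := by
    have heq : {x : ∀ n, B.E n | ∀ n, B.rng n (x n) = B.src (n + 1) (x (n + 1))}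
        = ⋂ n, (fun x : ∀ n, B.E n => (x n, x (n + 1))) ⁻¹'
            {q : B.E n × B.E (n + 1) | B.rng n q.1 = B.src (n + 1) q.2} := by
      ext x; simp [Set.mem_iInter]
    rw [heq]
    exact isClosed_iInter fun n =>
      IsClosed.preimage (((continuous_apply n).prodMk (continuous_apply (n + 1))))
        (isClosed_discrete _)
  exact isCompact_iff_compactSpace.mp hcl.isCompact

lemma continuous_eval1 (k : ℕ) :
    Continuous (fun x : B₁.Path × B₂.Path => x.1.val k) :=
  ((continuous_apply k).comp continuous_subtype_val).comp continuous_fst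

lemma continuous_eval2 (k : ℕ) :
    Continuous (fun x : B₁.Path × B₂.Path => x.2.val k) :=
  ((continuous_apply k).comp continuous_subtype_val).comp continuous_snd

lemma lam_congr (i j : Bool) (x y : B₁.Path × B₂.Path) (n : ℕ)
    (h : ∀ k ≤ n, x.1.val k = y.1.val k ∧ x.2.val k = y.2.val k) :
    lam B₁ B₂ i j x n = lam B₁ B₂ i j y n := by
  cases i <;> cases j <;>
  · induction n with
    | zero => simp [lam, lam00, lam01, lam10, lam11, (h 0 le_rfl).1, (h 0 le_rfl).2]
    | succ n ih =>
      have ih' := ih (fun k hk => h k (hk.trans (Nat.le_succ n)))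
      simp only [lam] at ih' ⊢
      simp only [lam00, lam01, lam10, lam11, (h (n + 1) le_rfl).1, (h (n + 1) le_rfl).2, ih']

lemma lam_locallyConstant (i j : Bool) (n : ℕ) :
    IsLocallyConstant (fun x : B₁.Path × B₂.Path => lam B₁ B₂ i j x n) := by
  rw [IsLocallyConstant.iff_exists_open]
  intro x
  refine ⟨⋂ k ∈ Finset.range (n + 1),
      ((fun y : B₁.Path × B₂.Path => y.1.val k) ⁻¹' {x.1.val k}) ∩
      ((fun y : B₁.Path × B₂.Path => y.2.val k) ⁻¹' {x.2.val k}), ?_, ?_, ?_⟩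
  · exact isOpen_biInter_finset fun k _ =>
      ((isOpen_discrete _).preimage (continuous_eval1 B₁ B₂ k)).inter
        ((isOpen_discrete _).preimage (continuous_eval2 B₁ B₂ k))
  · simp
  · intro y hy
    refine lam_congr B₁ B₂ i j y x n fun k hk => ?_
    have := Set.mem_iInter₂.mp hy k (Finset.mem_range.mpr (Nat.lt_succ_of_le hk))
    exact ⟨this.1, this.2⟩

lemma lamSet_clopen (n : ℕ) :
    IsClopen {p : (B₁.Path × B₂.Path) × (B₁.Path × B₂.Path) |
      ∀ i j : Bool, lam B₁ B₂ i j p.1 n = lam B₁ B₂ i j p.2 n} := by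
  have heq : {p : (B₁.Path × B₂.Path) × (B₁.Path × B₂.Path) |
      ∀ i j : Bool, lam B₁ B₂ i j p.1 n = lam B₁ B₂ i j p.2 n}
      = ⋂ i : Bool, ⋂ j : Bool,
        {p : (B₁.Path × B₂.Path) × (B₁.Path × B₂.Path) |
          lam B₁ B₂ i j p.1 n = lam B₁ B₂ i j p.2 n} := by
    ext p; simp [Set.mem_iInter]
  rw [heq]
  have key : ∀ i j : Bool, IsClopen {p : (B₁.Path × B₂.Path) × (B₁.Path × B₂.Path) |
      lam B₁ B₂ i j p.1 n = lam B₁ B₂ i j p.2 n} := by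
    intro i j
    have hc : Continuous (fun p : (B₁.Path × B₂.Path) × (B₁.Path × B₂.Path) =>
        (lam B₁ B₂ i j p.1 n, lam B₁ B₂ i j p.2 n)) :=
      (((lam_locallyConstant B₁ B₂ i j n).continuous).comp continuous_fst).prodMk
        (((lam_locallyConstant B₁ B₂ i j n).continuous).comp continuous_snd)
    exact ⟨(isClosed_discrete {q : Bool × Bool | q.1 = q.2}).preimage hc,
      (isOpen_discrete {q : Bool × Bool | q.1 = q.2}).preimage hc⟩
  exact ⟨isClosed_iInter fun i => isClosed_iInter fun j => (key i j).1,
    isOpen_iInter_of_finite fun i => isOpen_iInter_of_finite fun j => (key i j).2⟩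

lemma RRel_closed (n : ℕ) : IsClosed (RRel B₁ B₂ n) := by
  have heq : RRel B₁ B₂ n = ⋂ m, {p : (B₁.Path × B₂.Path) × (B₁.Path × B₂.Path) |
      n ≤ m → (p.1.1.val m = p.2.1.val m ∧ p.1.2.val m = p.2.2.val m)} := by
    ext p; simp [RRel, Set.mem_iInter]
  rw [heq]
  refine isClosed_iInter fun m => ?_
  by_cases hm : n ≤ m
  · have heq2 : {p : (B₁.Path × B₂.Path) × (B₁.Path × B₂.Path) |
        n ≤ m → (p.1.1.val m = p.2.1.val m ∧ p.1.2.val m = p.2.2.val m)}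
        = {p | p.1.1.val m = p.2.1.val m} ∩ {p | p.1.2.val m = p.2.2.val m} := by
      ext p; simp [hm]
    rw [heq2]
    refine IsClosed.inter ?_ ?_
    · have hc : Continuous (fun p : (B₁.Path × B₂.Path) × (B₁.Path × B₂.Path) =>
          (p.1.1.val m, p.2.1.val m)) :=
        ((continuous_eval1 B₁ B₂ m).comp continuous_fst).prodMk
          ((continuous_eval1 B₁ B₂ m).comp continuous_snd)
      exact (isClosed_discrete {q : B₁.E m × B₁.E m | q.1 = q.2}).preimage hc
    · have hc : Continuous (fun p : (B₁.Path × B₂.Path) × (B₁.Path × B₂.Path) =>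
          (p.1.2.val m, p.2.2.val m)) :=
        ((continuous_eval2 B₁ B₂ m).comp continuous_fst).prodMk
          ((continuous_eval2 B₁ B₂ m).comp continuous_snd)
      exact (isClosed_discrete {q : B₂.E m × B₂.E m | q.1 = q.2}).preimage hc
  · have heq2 : {p : (B₁.Path × B₂.Path) × (B₁.Path × B₂.Path) |
        n ≤ m → (p.1.1.val m = p.2.1.val m ∧ p.1.2.val m = p.2.2.val m)} = Set.univ := by
      ext p; simp [hm]
    rw [heq2]; exact isClosed_univ

lemma RRel'_eq (n : ℕ) : RRel' B₁ B₂ n = RRel B₁ B₂ (n + 1) ∩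
    {p : (B₁.Path × B₂.Path) × (B₁.Path × B₂.Path) |
      ∀ i j : Bool, lam B₁ B₂ i j p.1 n = lam B₁ B₂ i j p.2 n} := rfl

theorem RRel'_isEquiv_compact_clopen_and_mono (n : ℕ) :
    IsEquivSetRel (RRel' B₁ B₂ n) ∧
    RRel' B₁ B₂ n ⊆ RRel B₁ B₂ (n + 1) ∧
    IsCompact (RRel' B₁ B₂ n) ∧
    IsOpen {p : RRel B₁ B₂ (n + 1) |
      (p : (B₁.Path × B₂.Path) × (B₁.Path × B₂.Path)) ∈ RRel' B₁ B₂ n} ∧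
    IsClosed {p : RRel B₁ B₂ (n + 1) |
      (p : (B₁.Path × B₂.Path) × (B₁.Path × B₂.Path)) ∈ RRel' B₁ B₂ n} ∧
    RRel' B₁ B₂ n ⊆ RRel' B₁ B₂ (n + 1) := by
  have hsubtype : {p : RRel B₁ B₂ (n + 1) |
      (p : (B₁.Path × B₂.Path) × (B₁.Path × B₂.Path)) ∈ RRel' B₁ B₂ n}
      = Subtype.val ⁻¹' {p : (B₁.Path × B₂.Path) × (B₁.Path × B₂.Path) |
          ∀ i j : Bool, lam B₁ B₂ i j p.1 n = lam B₁ B₂ i j p.2 n} := by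
    ext p
    simp only [Set.mem_setOf_eq, Set.mem_preimage, RRel'_eq, Set.mem_inter_iff]
    exact ⟨fun h => h.2, fun h => ⟨p.2, h⟩⟩
  refine ⟨⟨fun x => ⟨fun m _ => ⟨rfl, rfl⟩, fun i j => rfl⟩,
      fun x y h => ⟨fun m hm => ⟨(h.1 m hm).1.symm, (h.1 m hm).2.symm⟩,
        fun i j => (h.2 i j).symm⟩,
      fun x y z h h' => ⟨fun m hm => ⟨(h.1 m hm).1.trans (h'.1 m hm).1,
        (h.1 m hm).2.trans (h'.1 m hm).2⟩, fun i j => (h.2 i j).trans (h'.2 i j)⟩⟩,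
    fun p hp => hp.1, ?_, ?_, ?_, ?_⟩
  · rw [RRel'_eq]
    exact ((RRel_closed B₁ B₂ (n + 1)).inter (lamSet_clopen B₁ B₂ n).1).isCompact
  · rw [hsubtype]
    exact (lamSet_clopen B₁ B₂ n).2.preimage continuous_subtype_val
  · rw [hsubtype]
    exact (lamSet_clopen B₁ B₂ n).1.preimage continuous_subtype_val
  · rintro p ⟨h1, h2⟩
    have ha := h1 (n + 1) le_rfl
    refine ⟨fun m hm => h1 m ((Nat.le_succ (n + 1)).trans hm), fun i j => ?_⟩
    cases i <;> cases j
    · have h00 := h2 false false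
      simp only [lam] at h00 ⊢
      simp only [lam00, ha.1, ha.2, h00]
    · have h01 := h2 false true
      simp only [lam] at h01 ⊢
      simp only [lam01, ha.1, ha.2, h01]
    · have h10 := h2 true false
      simp only [lam] at h10 ⊢
      simp only [lam10, ha.1, ha.2, h10]
    · have h11 := h2 true true
      simp only [lam] at h11 ⊢
      simp only [lam11, ha.1, ha.2, h11]
end

section
/- Let ((x₁,x₂),(y₁,y₂)) ∈ R. Suppose that for every n there exists m > n such that x_{1,m} is not maximal and there exists l > n such that x_{1,l} is not minimal. Then ((x₁,x₂),(y₁,y₂)) ∈ R'. The same conclusion holds under the analogous assumption on x₂ (for every n there exist m,l > n with x_{2,m} not maximal and x_{2,l} not minimal). -/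
attribute [local instance] Classical.propDecidable

variable (B₁ B₂ : OrderedBratteli)

/-!
STATEMENT 6 (the paper's Lemma 2.3). Let `(x, y) ∈ R = ⋃ n, R_n`. If the first
coordinate `x₁` of `x` has non-maximal edges and non-minimal edges at arbitrarily
large levels, then `(x, y) ∈ R' = ⋃ n, R'_n`; the same holds for the analogous
assumption on the second coordinate `x₂`.
-/
/-- Generic "cut" lemma: if two boolean sequences satisfy the same recursion
`a (k+1) = if p (k+1) then (if q (k+1) then a k else true) else false` for all
levels `≥ m`, and the recursion is cut at level `m` (i.e. `¬ p m ∨ ¬ q m`),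
then the sequences agree at all levels `≥ m`. -/
lemma lam_cut_aux (p q : ℕ → Prop) (a b : ℕ → Bool) (m : ℕ) (hm : 1 ≤ m)
    (ha : ∀ k, m ≤ k + 1 →
      a (k + 1) = if p (k + 1) then (if q (k + 1) then a k else true) else false)
    (hb : ∀ k, m ≤ k + 1 →
      b (k + 1) = if p (k + 1) then (if q (k + 1) then b k else true) else false)
    (hcut : ¬ p m ∨ ¬ q m) :
    ∀ n, m ≤ n → a n = b n := by
  intro n hn
  induction n, hn using Nat.le_induction with
  | base =>
    obtain ⟨k, rfl⟩ : ∃ k, m = k + 1 := ⟨m - 1, by omega⟩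
    rw [ha k le_rfl, hb k le_rfl]
    rcases hcut with h | h
    · simp [h]
    · by_cases hp : p (k + 1) <;> simp [hp, h]
  | succ n hn ih =>
    rw [ha n (by omega), hb n (by omega), ih]

theorem mem_RRel'_of_coordinate_not_eventually_extreme
    (x y : B₁.Path × B₂.Path)
    (hR : (x, y) ∈ ⋃ n, RRel B₁ B₂ n) :
    ((∀ n : ℕ, (∃ m, n < m ∧ ¬ B₁.IsMaxEdge (x.1.val m)) ∧
        (∃ l, n < l ∧ ¬ B₁.IsMinEdge (x.1.val l))) →
      (x, y) ∈ ⋃ n, RRel' B₁ B₂ n) ∧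
    ((∀ n : ℕ, (∃ m, n < m ∧ ¬ B₂.IsMaxEdge (x.2.val m)) ∧
        (∃ l, n < l ∧ ¬ B₂.IsMinEdge (x.2.val l))) →
      (x, y) ∈ ⋃ n, RRel' B₁ B₂ n) := by
  rw [Set.mem_iUnion] at hR
  obtain ⟨N, hN⟩ := hR
  replace hN : ∀ k, N ≤ k → x.1.val k = y.1.val k ∧ x.2.val k = y.2.val k := hN
  -- the recursion equations for the four λ's, for `y`, rewritten via `hN`
  have hy00 : ∀ k, N ≤ k + 1 → lam00 B₁ B₂ y (k + 1) =
      if B₁.IsMaxEdge (x.1.val (k + 1)) then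
        (if B₂.IsMaxEdge (x.2.val (k + 1)) then lam00 B₁ B₂ y k else true) else false := by
    intro k hk
    rw [(hN (k + 1) hk).1, (hN (k + 1) hk).2]; rfl
  have hy01 : ∀ k, N ≤ k + 1 → lam01 B₁ B₂ y (k + 1) =
      if B₂.IsMinEdge (x.2.val (k + 1)) then
        (if B₁.IsMaxEdge (x.1.val (k + 1)) then lam01 B₁ B₂ y k else true) else false := by
    intro k hk
    rw [(hN (k + 1) hk).1, (hN (k + 1) hk).2]; rfl
  have hy11 : ∀ k, N ≤ k + 1 → lam11 B₁ B₂ y (k + 1) =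
      if B₁.IsMinEdge (x.1.val (k + 1)) then
        (if B₂.IsMinEdge (x.2.val (k + 1)) then lam11 B₁ B₂ y k else true) else false := by
    intro k hk
    rw [(hN (k + 1) hk).1, (hN (k + 1) hk).2]; rfl
  have hy10 : ∀ k, N ≤ k + 1 → lam10 B₁ B₂ y (k + 1) =
      if B₂.IsMaxEdge (x.2.val (k + 1)) then
        (if B₁.IsMinEdge (x.1.val (k + 1)) then lam10 B₁ B₂ y k else true) else false := by
    intro k hk
    rw [(hN (k + 1) hk).1, (hN (k + 1) hk).2]; rfl
  constructor
  · intro h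
    obtain ⟨m, hmN, hm⟩ := (h N).1
    obtain ⟨l, hlN, hl⟩ := (h N).2
    refine Set.mem_iUnion.2 ⟨max m l, ?_, ?_⟩
    · intro k hk
      exact hN k (by omega)
    · have e00 : lam00 B₁ B₂ x (max m l) = lam00 B₁ B₂ y (max m l) :=
        lam_cut_aux (fun j => B₁.IsMaxEdge (x.1.val j)) (fun j => B₂.IsMaxEdge (x.2.val j))
          _ _ m (by omega) (fun k _ => rfl) (fun k hk => hy00 k (by omega))
          (Or.inl hm) _ (le_max_left _ _)
      have e01 : lam01 B₁ B₂ x (max m l) = lam01 B₁ B₂ y (max m l) :=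
        lam_cut_aux (fun j => B₂.IsMinEdge (x.2.val j)) (fun j => B₁.IsMaxEdge (x.1.val j))
          _ _ m (by omega) (fun k _ => rfl) (fun k hk => hy01 k (by omega))
          (Or.inr hm) _ (le_max_left _ _)
      have e11 : lam11 B₁ B₂ x (max m l) = lam11 B₁ B₂ y (max m l) :=
        lam_cut_aux (fun j => B₁.IsMinEdge (x.1.val j)) (fun j => B₂.IsMinEdge (x.2.val j))
          _ _ l (by omega) (fun k _ => rfl) (fun k hk => hy11 k (by omega))
          (Or.inl hl) _ (le_max_right _ _)
      have e10 : lam10 B₁ B₂ x (max m l) = lam10 B₁ B₂ y (max m l) :=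
        lam_cut_aux (fun j => B₂.IsMaxEdge (x.2.val j)) (fun j => B₁.IsMinEdge (x.1.val j))
          _ _ l (by omega) (fun k _ => rfl) (fun k hk => hy10 k (by omega))
          (Or.inr hl) _ (le_max_right _ _)
      intro i j
      cases i <;> cases j <;> simp only [lam] <;> first | exact e00 | exact e01 | exact e11 | exact e10
  · intro h
    obtain ⟨m, hmN, hm⟩ := (h N).1
    obtain ⟨l, hlN, hl⟩ := (h N).2
    refine Set.mem_iUnion.2 ⟨max m l, ?_, ?_⟩
    · intro k hk
      exact hN k (by omega)
    · have e00 : lam00 B₁ B₂ x (max m l) = lam00 B₁ B₂ y (max m l) :=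
        lam_cut_aux (fun j => B₁.IsMaxEdge (x.1.val j)) (fun j => B₂.IsMaxEdge (x.2.val j))
          _ _ m (by omega) (fun k _ => rfl) (fun k hk => hy00 k (by omega))
          (Or.inr hm) _ (le_max_left _ _)
      have e01 : lam01 B₁ B₂ x (max m l) = lam01 B₁ B₂ y (max m l) :=
        lam_cut_aux (fun j => B₂.IsMinEdge (x.2.val j)) (fun j => B₁.IsMaxEdge (x.1.val j))
          _ _ l (by omega) (fun k _ => rfl) (fun k hk => hy01 k (by omega))
          (Or.inl hl) _ (le_max_right _ _)
      have e11 : lam11 B₁ B₂ x (max m l) = lam11 B₁ B₂ y (max m l) :=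
        lam_cut_aux (fun j => B₁.IsMinEdge (x.1.val j)) (fun j => B₂.IsMinEdge (x.2.val j))
          _ _ l (by omega) (fun k _ => rfl) (fun k hk => hy11 k (by omega))
          (Or.inr hl) _ (le_max_right _ _)
      have e10 : lam10 B₁ B₂ x (max m l) = lam10 B₁ B₂ y (max m l) :=
        lam_cut_aux (fun j => B₂.IsMaxEdge (x.2.val j)) (fun j => B₁.IsMinEdge (x.1.val j))
          _ _ m (by omega) (fun k _ => rfl) (fun k hk => hy10 k (by omega))
          (Or.inl hm) _ (le_max_left _ _)
      intro i j
      cases i <;> cases j <;> simp only [lam] <;> first | exact e00 | exact e01 | exact e11 | exact e10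
end

section
/- Assume that for every n ≥ 1, every i = 1,2 and every pair of vertices v ∈ V_{i,n-1}, w ∈ V_{i,n}, there are more than three edges e ∈ E_{i,n} with s(e) = v and r(e) = w, and that each B_i is properly ordered: there is a unique infinite path p_i ∈ X_i all of whose edges are maximal and a unique infinite path q_i ∈ X_i all of whose edges are minimal. Then the equivalence relation R' is minimal: for every x ∈ X the class [x]_{R'} = {y ∈ X : (x,y) ∈ R'} is dense in X. -/
attribute [local instance] Classical.propDecidable

variable (B₁ B₂ : OrderedBratteli)

/-!
Fix `x`, a target point `z` and a level `N`. Keep the edges of `x` from index `N + 3` on, copy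
those of `z` below `N`, join the two parts by any edge at index `N`, and choose the edges at
indices `N + 1` and `N + 2` to be maximal, minimal or neither, at will: every fiber has at least
three edges. The functions `λ^{ij}` form a finite automaton driven by the kinds of the edges,
and from any state two steps of it reach every value that `λ_{N+2}(x)` can take. The new point
therefore lies in the `RRel' (N + 2)`-class of `x` and agrees with `z` below `N`; letting
`N → ∞` gives points of that class converging to `z`.
-/

open Filter Topology

namespace Bratteli

variable {B : Bratteli}

def IsLinkedFrom (B : Bratteli) (n : ℕ) (f : ∀ m, B.E m) : Prop :=
  ∀ m, n ≤ m → B.rng m (f m) = B.src (m + 1) (f (m + 1))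

lemma IsLinkedFrom.update {n : ℕ} {f : ∀ m, B.E m} (hf : B.IsLinkedFrom (n + 1) f) {e : B.E n}
    (he : B.rng n e = B.src (n + 1) (f (n + 1))) :
    B.IsLinkedFrom n (Function.update f n e) := by
  intro m hm
  rcases hm.eq_or_lt with rfl | hlt
  · rwa [Function.update_self, Function.update_of_ne (by omega)]
  · rw [Function.update_of_ne (by omega), Function.update_of_ne (by omega)]
    exact hf m hlt

lemma IsLinkedFrom.prefix (z : B.Path) {N : ℕ} {g : ∀ m, B.E m} (hg : B.IsLinkedFrom N g)
    (hzg : ∀ k, k + 1 = N → B.rng k (z.val k) = B.src (k + 1) (g (k + 1))) :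
    B.IsLinkedFrom 0 (fun m => if m < N then z.val m else g m) := by
  intro m _
  dsimp only
  rcases lt_trichotomy (m + 1) N with h | rfl | h
  · rw [if_pos (by omega), if_pos h]
    exact z.2 m
  · rw [if_pos m.lt_succ_self, if_neg (lt_irrefl _)]
    exact hzg m rfl
  · rw [if_neg (by omega), if_neg (by omega)]
    exact hg m (by omega)

theorem exists_path_eq_of_lt_of_lt
    (hconn : ∀ n (v : B.V n) (w : B.V (n + 1)), ∃ e, B.src n e = v ∧ B.rng n e = w)
    (z : B.Path) {N : ℕ} {f : ∀ m, B.E m} (hf : B.IsLinkedFrom (N + 1) f) :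
    ∃ y : B.Path, (∀ m < N, y.val m = z.val m) ∧ ∀ m, N < m → y.val m = f m := by
  obtain ⟨e, hy⟩ : ∃ e : B.E N,
      B.IsLinkedFrom 0 (fun m => if m < N then z.val m else Function.update f N e m) := by
    cases N with
    | zero =>
      obtain ⟨e, he⟩ := B.rng_surjective 0 (B.src 1 (f 1))
      exact ⟨e, (hf.update he).prefix z fun k hk => absurd hk k.succ_ne_zero⟩
    | succ n =>
      obtain ⟨e, hes, her⟩ := hconn (n + 1) (B.rng n (z.val n)) (B.src (n + 2) (f (n + 2)))
      refine ⟨e, (hf.update her).prefix z fun k hk => ?_⟩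
      obtain rfl : k = n := by omega
      rw [Function.update_self]
      exact hes.symm
  refine ⟨⟨_, fun m => hy m m.zero_le⟩, fun m hm => if_pos hm, fun m hm => ?_⟩
  dsimp only
  rw [if_neg (by omega), Function.update_of_ne (by omega)]

theorem tendsto_path_of_eventually_eq {ι : Type*} {l : Filter ι} {y : ι → B.Path} {z : B.Path}
    (h : ∀ m, ∀ᶠ i in l, (y i).val m = z.val m) : Tendsto y l (𝓝 z) := by
  rw [tendsto_subtype_rng, tendsto_pi_nhds]
  intro m
  rw [nhds_discrete, tendsto_pure]
  exact h m

lemma two_lt_card_fiber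
    (hedge : ∀ (n : ℕ) (v : B.V n) (w : B.V (n + 1)),
      3 < Nat.card {e : B.E n // B.src n e = v ∧ B.rng n e = w})
    (n : ℕ) (w : B.V (n + 1)) : 2 < Nat.card {e : B.E n // B.rng n e = w} := by
  obtain ⟨v⟩ := B.neV n
  calc 2 < Nat.card {e : B.E n // B.src n e = v ∧ B.rng n e = w} := by linarith [hedge n v w]
    _ ≤ _ := Nat.card_le_card_of_injective (fun e => ⟨e.1, e.2.2⟩) fun _ _ h =>
      Subtype.ext (by simpa using h)

lemma exists_edge
    (hedge : ∀ (n : ℕ) (v : B.V n) (w : B.V (n + 1)),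
      3 < Nat.card {e : B.E n // B.src n e = v ∧ B.rng n e = w})
    (n : ℕ) (v : B.V n) (w : B.V (n + 1)) : ∃ e, B.src n e = v ∧ B.rng n e = w := by
  obtain ⟨⟨e, he⟩⟩ := (Nat.card_pos_iff.mp (by linarith [hedge n v w])).1
  exact ⟨e, he⟩

end Bratteli

inductive EdgeKind | max | min | mid
  deriving DecidableEq

instance : Fintype EdgeKind := ⟨{.max, .min, .mid}, fun k => by cases k <;> simp⟩

namespace EdgeKind

def isMax : EdgeKind → Bool
  | max => true
  | _ => false

def isMin : EdgeKind → Bool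
  | min => true
  | _ => false

end EdgeKind

namespace OrderedBratteli

variable {B : OrderedBratteli} {n : ℕ}

def HasKind (B : OrderedBratteli) (e : B.E n) (k : EdgeKind) : Prop :=
  (B.IsMaxEdge e ↔ k.isMax) ∧ (B.IsMinEdge e ↔ k.isMin)

lemma IsMaxEdge.eq {e e' : B.E n} (h : B.IsMaxEdge e) (h' : B.IsMaxEdge e')
    (hr : B.rng n e' = B.rng n e) : e' = e :=
  B.le_antisymm n e' e (h e' hr) (h' e hr.symm)

lemma IsMinEdge.eq {e e' : B.E n} (h : B.IsMinEdge e) (h' : B.IsMinEdge e')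
    (hr : B.rng n e' = B.rng n e) : e' = e :=
  B.le_antisymm n e' e (h' e hr.symm) (h e' hr)

lemma not_isMinEdge_of_isMaxEdge {w : B.V (n + 1)}
    (hfib : 1 < Nat.card {e : B.E n // B.rng n e = w}) {e : B.E n} (hw : B.rng n e = w)
    (hmax : B.IsMaxEdge e) : ¬ B.IsMinEdge e := by
  intro hmin
  obtain ⟨a, b, hab⟩ := Finite.one_lt_card_iff_nontrivial.mp hfib
  have hsingle : ∀ c : {e : B.E n // B.rng n e = w}, c.1 = e := fun c =>
    B.le_antisymm n c.1 e (hmax c.1 (c.2.trans hw.symm)) (hmin c.1 (c.2.trans hw.symm))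
  exact hab (Subtype.ext ((hsingle a).trans (hsingle b).symm))

lemma exists_hasKind (hfib : 1 < Nat.card {e' : B.E n // B.rng n e' = B.rng n e}) :
    ∃ k, B.HasKind e k := by
  by_cases hmax : B.IsMaxEdge e
  · exact ⟨.max, by simp [HasKind, EdgeKind.isMax, EdgeKind.isMin, hmax,
      not_isMinEdge_of_isMaxEdge hfib rfl hmax]⟩
  by_cases hmin : B.IsMinEdge e
  · exact ⟨.min, by simp [HasKind, EdgeKind.isMax, EdgeKind.isMin, hmax, hmin]⟩
  · exact ⟨.mid, by simp [HasKind, EdgeKind.isMax, EdgeKind.isMin, hmax, hmin]⟩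

theorem exists_rng_eq_hasKind {w : B.V (n + 1)} (hfib : 2 < Nat.card {e : B.E n // B.rng n e = w})
    (k : EdgeKind) : ∃ e, B.rng n e = w ∧ B.HasKind e k := by
  let _ : LinearOrder {e : B.E n // B.rng n e = w} :=
    { le a b := B.le n a.1 b.1
      le_refl a := B.le_refl n a.1
      le_trans a b c := B.le_trans n a.1 b.1 c.1
      le_antisymm a b h h' := Subtype.ext (B.le_antisymm n a.1 b.1 h h')
      le_total a b := B.le_total n a.1 b.1 (a.2.trans b.2.symm)
      toDecidableLE := fun _ _ => Classical.propDecidable _ }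
  have : Nonempty {e : B.E n // B.rng n e = w} :=
    let ⟨e, he⟩ := B.rng_surjective n w; ⟨⟨e, he⟩⟩
  obtain ⟨a, ha⟩ := Finite.exists_max (id : {e : B.E n // B.rng n e = w} → _)
  obtain ⟨b, hb⟩ := Finite.exists_min (id : {e : B.E n // B.rng n e = w} → _)
  have hamax : B.IsMaxEdge a.1 := fun e he => ha ⟨e, he.trans a.2⟩
  have hbmin : B.IsMinEdge b.1 := fun e he => hb ⟨e, he.trans b.2⟩
  have hfib' : 1 < Nat.card {e : B.E n // B.rng n e = w} := one_lt_two.trans hfib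
  cases k
  · exact ⟨a.1, a.2, by simp [HasKind, EdgeKind.isMax, EdgeKind.isMin, hamax,
      not_isMinEdge_of_isMaxEdge hfib' a.2 hamax]⟩
  · refine ⟨b.1, b.2, ?_, by simp [EdgeKind.isMin, hbmin]⟩
    simpa [EdgeKind.isMax] using fun hbmax => not_isMinEdge_of_isMaxEdge hfib' b.2 hbmax hbmin
  · obtain ⟨c, hca, hcb⟩ := Cardinal.exists_ne_ne_of_three_le
      (by rw [← Nat.cast_card]; exact_mod_cast hfib) a b
    refine ⟨c.1, c.2, ?_, ?_⟩
    · simpa [EdgeKind.isMax] using fun hc => hca (Subtype.ext (hamax.eq hc (c.2.trans a.2.symm)))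
    · simpa [EdgeKind.isMin] using fun hc => hcb (Subtype.ext (hbmin.eq hc (c.2.trans b.2.symm)))

theorem exists_path_eq_hasKind
    (hfib : ∀ n (w : B.V (n + 1)), 2 < Nat.card {e : B.E n // B.rng n e = w})
    (hconn : ∀ n (v : B.V n) (w : B.V (n + 1)), ∃ e, B.src n e = v ∧ B.rng n e = w)
    (x z : B.Path) (N : ℕ) (k k' : EdgeKind) :
    ∃ y : B.Path, (∀ m < N, y.val m = z.val m) ∧ (∀ m, N + 3 ≤ m → y.val m = x.val m) ∧
      B.HasKind (y.val (N + 1)) k ∧ B.HasKind (y.val (N + 2)) k' := by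
  obtain ⟨e₂, he₂, hk'⟩ := exists_rng_eq_hasKind (hfib (N + 2) (B.src (N + 3) (x.val (N + 3)))) k'
  have hf₂ := (show B.IsLinkedFrom (N + 3) x.val from fun m _ => x.2 m).update he₂
  obtain ⟨e₁, he₁, hk⟩ := exists_rng_eq_hasKind (hfib (N + 1) (B.src (N + 2) e₂)) k
  have hf₁ := hf₂.update (e := e₁) (by rwa [Function.update_self])
  obtain ⟨y, hyz, hyf⟩ := Bratteli.exists_path_eq_of_lt_of_lt hconn z hf₁
  refine ⟨y, hyz, fun m hm => ?_, ?_, ?_⟩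
  · rw [hyf m (by omega), Function.update_of_ne (by omega), Function.update_of_ne (by omega)]
  · rwa [hyf _ (by omega), Function.update_self]
  · rwa [hyf _ (by omega), Function.update_of_ne (by omega), Function.update_self]

end OrderedBratteli

-- One step of the recursion defining the `λ^{ij}`: `s` holds their previous values and `k₁`, `k₂`
-- are the kinds of the two new edges.
def lamStep (k₁ k₂ : EdgeKind) (s : Bool → Bool → Bool) : Bool → Bool → Bool
  | false, false => k₁.isMax && (!k₂.isMax || s false false)
  | false, true => k₂.isMin && (!k₁.isMax || s false true)
  | true, true => k₁.isMin && (!k₂.isMin || s true true)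
  | true, false => k₂.isMax && (!k₁.isMin || s true false)

def LamAdmissible (a : Bool → Bool → Bool) : Prop :=
  ¬ (a false false ∧ a true true) ∧ ¬ (a false true ∧ a true false)

lemma lamStep_admissible (k₁ k₂ : EdgeKind) (s : Bool → Bool → Bool) :
    LamAdmissible (lamStep k₁ k₂ s) := by
  revert k₁ k₂ s
  unfold LamAdmissible
  decide

-- A `mid` edge in one component resets `λ^{ij}` to `1` or `0` whatever `s` is, so the first step
-- can erase the dependence on `s`.
lemma exists_lamStep_lamStep_eq {a : Bool → Bool → Bool} (ha : LamAdmissible a) :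
    ∃ k₁ k₂ k₁' k₂', ∀ s, lamStep k₁ k₂ (lamStep k₁' k₂' s) = a := by
  revert a
  unfold LamAdmissible
  decide

section

variable {B₁ B₂}

lemma lam_succ {x : B₁.Path × B₂.Path} {n : ℕ} {k₁ k₂ : EdgeKind}
    (h₁ : B₁.HasKind (x.1.val (n + 1)) k₁) (h₂ : B₂.HasKind (x.2.val (n + 1)) k₂) :
    (fun i j => lam B₁ B₂ i j x (n + 1)) = lamStep k₁ k₂ (fun i j => lam B₁ B₂ i j x n) := by
  funext i j
  cases i <;> cases j <;>
    simp only [lam, lam00, lam01, lam11, lam10, lamStep, h₁.1, h₁.2, h₂.1, h₂.2] <;>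
    cases k₁ <;> cases k₂ <;> simp [EdgeKind.isMax, EdgeKind.isMin]

theorem exists_mem_rRel'_eq_of_lt
    (hfib₁ : ∀ n (w : B₁.V (n + 1)), 2 < Nat.card {e : B₁.E n // B₁.rng n e = w})
    (hconn₁ : ∀ n (v : B₁.V n) (w : B₁.V (n + 1)), ∃ e, B₁.src n e = v ∧ B₁.rng n e = w)
    (hfib₂ : ∀ n (w : B₂.V (n + 1)), 2 < Nat.card {e : B₂.E n // B₂.rng n e = w})
    (hconn₂ : ∀ n (v : B₂.V n) (w : B₂.V (n + 1)), ∃ e, B₂.src n e = v ∧ B₂.rng n e = w)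
    (x z : B₁.Path × B₂.Path) (N : ℕ) :
    ∃ y, (∀ m < N, y.1.val m = z.1.val m ∧ y.2.val m = z.2.val m) ∧
      (x, y) ∈ RRel' B₁ B₂ (N + 2) := by
  obtain ⟨k₁, hk₁⟩ := OrderedBratteli.exists_hasKind (one_lt_two.trans (hfib₁ _ _))
  obtain ⟨k₂, hk₂⟩ := OrderedBratteli.exists_hasKind (one_lt_two.trans (hfib₂ _ _))
  have hadm : LamAdmissible fun i j => lam B₁ B₂ i j x (N + 2) := by
    rw [lam_succ hk₁ hk₂]
    exact lamStep_admissible k₁ k₂ _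
  obtain ⟨l₁, l₂, l₁', l₂', hl⟩ := exists_lamStep_lamStep_eq hadm
  obtain ⟨y₁, hz₁, hx₁, hl₁', hl₁⟩ :=
    OrderedBratteli.exists_path_eq_hasKind hfib₁ hconn₁ x.1 z.1 N l₁' l₁
  obtain ⟨y₂, hz₂, hx₂, hl₂', hl₂⟩ :=
    OrderedBratteli.exists_path_eq_hasKind hfib₂ hconn₂ x.2 z.2 N l₂' l₂
  have hlam : (fun i j => lam B₁ B₂ i j (y₁, y₂) (N + 2)) = fun i j => lam B₁ B₂ i j x (N + 2) := by
    rw [lam_succ hl₁ hl₂, lam_succ hl₁' hl₂', hl]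
  exact ⟨(y₁, y₂), fun m hm => ⟨hz₁ m hm, hz₂ m hm⟩,
    fun m hm => ⟨(hx₁ m hm).symm, (hx₂ m hm).symm⟩, fun i j => (congrFun₂ hlam i j).symm⟩

end

theorem RRel'_minimal
    (hedge₁ : ∀ (n : ℕ) (v : B₁.V n) (w : B₁.V (n + 1)),
      3 < Nat.card {e : B₁.E n // B₁.src n e = v ∧ B₁.rng n e = w})
    (hedge₂ : ∀ (n : ℕ) (v : B₂.V n) (w : B₂.V (n + 1)),
      3 < Nat.card {e : B₂.E n // B₂.src n e = v ∧ B₂.rng n e = w})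
    (x : B₁.Path × B₂.Path) :
    Dense {y : B₁.Path × B₂.Path | (x, y) ∈ ⋃ n, RRel' B₁ B₂ n} := by
  intro z
  choose y hyz hyR using exists_mem_rRel'_eq_of_lt
    (Bratteli.two_lt_card_fiber hedge₁) (Bratteli.exists_edge hedge₁)
    (Bratteli.two_lt_card_fiber hedge₂) (Bratteli.exists_edge hedge₂) x z
  have hlim : Tendsto y atTop (𝓝 z) :=
    (Bratteli.tendsto_path_of_eventually_eq fun m =>
      eventually_atTop.2 ⟨m + 1, fun N hN => (hyz N m (by omega)).1⟩).prodMk_nhds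
    (Bratteli.tendsto_path_of_eventually_eq fun m =>
      eventually_atTop.2 ⟨m + 1, fun N hN => (hyz N m (by omega)).2⟩)
  exact mem_closure_of_tendsto hlim (.of_forall fun N => Set.mem_iUnion.2 ⟨N + 2, hyR N⟩)
end

section
/- Assume that for every n ≥ 1, every i = 1,2 and every pair of vertices v ∈ V_{i,n-1}, w ∈ V_{i,n}, there are more than three edges e ∈ E_{i,n} with s(e) = v and r(e) = w, and that each B_i is properly ordered with unique maximal path p_i and unique minimal path q_i. Let U_i ⊆ X_i be clopen sets with p_i ∉ U_i and q_i ∉ U_i, and set B = ({p₁} × U₂) ∪ (U₁ × {p₂}) and B* = ({q₁} × U₂) ∪ (U₁ × {q₂}). Then R' ∩ (B × B*) = ∅. -/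
attribute [local instance] Classical.propDecidable

variable (B₁ B₂ : OrderedBratteli)

lemma no_maxmin (B : OrderedBratteli)
    (hedge : ∀ (n : ℕ) (v : B.V n) (w : B.V (n + 1)),
      3 < Nat.card {e : B.E n // B.src n e = v ∧ B.rng n e = w})
    {n : ℕ} (e : B.E n) (hmax : B.IsMaxEdge e) (hmin : B.IsMinEdge e) : False := by
  have h := hedge n (B.src n e) (B.rng n e)
  have h1 : 1 < Nat.card {e' : B.E n // B.src n e' = B.src n e ∧ B.rng n e' = B.rng n e} := by
    omega
  have : Nontrivial {e' : B.E n // B.src n e' = B.src n e ∧ B.rng n e' = B.rng n e} :=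
    haveI : Finite (B.E n) := B.finE n
    Finite.one_lt_card_iff_nontrivial.mp h1
  obtain ⟨e', he'⟩ := exists_ne
    (⟨e, rfl, rfl⟩ : {e' : B.E n // B.src n e' = B.src n e ∧ B.rng n e' = B.rng n e})
  have hr : B.rng n e'.val = B.rng n e := e'.2.2
  exact he' (Subtype.ext (B.le_antisymm n e'.val e (hmax _ hr) (hmin _ hr)))

lemma lam01_of_min (x : B₁.Path × B₂.Path) (h2 : ∀ m, B₂.IsMinEdge (x.2.val m)) (n : ℕ) :
    lam01 B₁ B₂ x n = true := by
  induction n with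
  | zero => simp [lam01, h2 0]
  | succ n ih =>
    rw [lam01, if_pos (h2 (n + 1))]
    split_ifs with h
    exacts [ih, rfl]

lemma lam01_eq_true_iff (x : B₁.Path × B₂.Path) (h1 : ∀ m, B₁.IsMaxEdge (x.1.val m)) (n : ℕ) :
    lam01 B₁ B₂ x n = true ↔ ∀ m ≤ n, B₂.IsMinEdge (x.2.val m) := by
  induction n with
  | zero =>
    constructor
    · intro h m hm
      interval_cases m
      by_contra hc
      rw [lam01, if_neg hc] at h
      exact absurd h (by simp)
    · intro h
      rw [lam01, if_pos (h 0 le_rfl)]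
  | succ n ih =>
    have hmax := h1 (n + 1)
    constructor
    · intro h
      have hmin : B₂.IsMinEdge (x.2.val (n + 1)) := by
        by_contra hc
        rw [lam01, if_neg hc] at h
        exact absurd h (by simp)
      rw [lam01, if_pos hmin, if_pos hmax] at h
      intro m hm
      rcases Nat.lt_or_ge m (n + 1) with h' | h'
      · exact ih.mp h m (Nat.lt_succ_iff.mp h')
      · rw [le_antisymm hm h']
        exact hmin
    · intro h
      rw [lam01, if_pos (h (n + 1) le_rfl), if_pos hmax]
      exact ih.mpr fun m hm => h m (hm.trans (Nat.le_succ n))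

lemma lam10_of_max (x : B₁.Path × B₂.Path) (h2 : ∀ m, B₂.IsMaxEdge (x.2.val m)) (n : ℕ) :
    lam10 B₁ B₂ x n = true := by
  induction n with
  | zero => simp [lam10, h2 0]
  | succ n ih =>
    rw [lam10, if_pos (h2 (n + 1))]
    split_ifs with h
    exacts [ih, rfl]

lemma lam10_eq_true_iff (x : B₁.Path × B₂.Path) (h1 : ∀ m, B₁.IsMinEdge (x.1.val m)) (n : ℕ) :
    lam10 B₁ B₂ x n = true ↔ ∀ m ≤ n, B₂.IsMaxEdge (x.2.val m) := by
  induction n with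
  | zero =>
    constructor
    · intro h m hm
      interval_cases m
      by_contra hc
      rw [lam10, if_neg hc] at h
      exact absurd h (by simp)
    · intro h
      rw [lam10, if_pos (h 0 le_rfl)]
  | succ n ih =>
    have hmin := h1 (n + 1)
    constructor
    · intro h
      have hmax : B₂.IsMaxEdge (x.2.val (n + 1)) := by
        by_contra hc
        rw [lam10, if_neg hc] at h
        exact absurd h (by simp)
      rw [lam10, if_pos hmax, if_pos hmin] at h
      intro m hm
      rcases Nat.lt_or_ge m (n + 1) with h' | h'
      · exact ih.mp h m (Nat.lt_succ_iff.mp h')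
      · rw [le_antisymm hm h']
        exact hmax
    · intro h
      rw [lam10, if_pos (h (n + 1) le_rfl), if_pos hmin]
      exact ih.mpr fun m hm => h m (hm.trans (Nat.le_succ n))

/-!
STATEMENT 8 (the paper's Lemma 2.6). With the diagrams as in Lemma 2.4 (more than
three edges between consecutive vertices, properly ordered with unique maximal path
`pᵢ` and unique minimal path `qᵢ`), let `Uᵢ ⊆ Xᵢ` be clopen sets avoiding `pᵢ` and
`qᵢ`, and put `B = ({p₁} × U₂) ∪ (U₁ × {p₂})`, `B* = ({q₁} × U₂) ∪ (U₁ × {q₂})`.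
Then `R' ∩ (B × B*) = ∅`.
-/
theorem RRel'_inter_B_times_Bstar_empty
    (hedge₁ : ∀ (n : ℕ) (v : B₁.V n) (w : B₁.V (n + 1)),
      3 < Nat.card {e : B₁.E n // B₁.src n e = v ∧ B₁.rng n e = w})
    (hedge₂ : ∀ (n : ℕ) (v : B₂.V n) (w : B₂.V (n + 1)),
      3 < Nat.card {e : B₂.E n // B₂.src n e = v ∧ B₂.rng n e = w})
    (p₁ : B₁.Path) (hp₁ : ∀ n, B₁.IsMaxEdge (p₁.val n))
    (hp₁uniq : ∀ p : B₁.Path, (∀ n, B₁.IsMaxEdge (p.val n)) → p = p₁)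
    (q₁ : B₁.Path) (hq₁ : ∀ n, B₁.IsMinEdge (q₁.val n))
    (hq₁uniq : ∀ q : B₁.Path, (∀ n, B₁.IsMinEdge (q.val n)) → q = q₁)
    (p₂ : B₂.Path) (hp₂ : ∀ n, B₂.IsMaxEdge (p₂.val n))
    (hp₂uniq : ∀ p : B₂.Path, (∀ n, B₂.IsMaxEdge (p.val n)) → p = p₂)
    (q₂ : B₂.Path) (hq₂ : ∀ n, B₂.IsMinEdge (q₂.val n))
    (hq₂uniq : ∀ q : B₂.Path, (∀ n, B₂.IsMinEdge (q.val n)) → q = q₂)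
    (U₁ : Set B₁.Path) (hU₁ : IsClopen U₁) (hp₁U : p₁ ∉ U₁) (hq₁U : q₁ ∉ U₁)
    (U₂ : Set B₂.Path) (hU₂ : IsClopen U₂) (hp₂U : p₂ ∉ U₂) (hq₂U : q₂ ∉ U₂) :
    (⋃ n, RRel' B₁ B₂ n) ∩
      ((({p₁} : Set B₁.Path) ×ˢ U₂ ∪ U₁ ×ˢ ({p₂} : Set B₂.Path)) ×ˢ
        (({q₁} : Set B₁.Path) ×ˢ U₂ ∪ U₁ ×ˢ ({q₂} : Set B₂.Path))) = ∅ := by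
  rw [Set.eq_empty_iff_forall_notMem]
  rintro ⟨x, y⟩ ⟨hR, hxy⟩
  obtain ⟨hx, hy⟩ := hxy
  simp only [Set.mem_union, Set.mem_prod, Set.mem_singleton_iff] at hx hy
  obtain ⟨n, hRn, hlam⟩ := Set.mem_iUnion.mp hR
  rcases hx with ⟨hx1, hx2⟩ | ⟨hx1, hx2⟩
  · rcases hy with ⟨hy1, hy2⟩ | ⟨hy1, hy2⟩
    · -- x.1 = p₁, y.1 = q₁
      have h := (hRn (n + 1) le_rfl).1
      rw [hx1, hy1] at h
      exact absurd (hq₁ (n + 1)) fun hm =>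
        no_maxmin B₁ hedge₁ (q₁.val (n + 1)) (h ▸ hp₁ (n + 1)) hm
    · -- x.1 = p₁, x.2 ∈ U₂, y.1 ∈ U₁, y.2 = q₂
      have hmin2 : ∀ m, B₂.IsMinEdge (y.2.val m) := fun m => by rw [hy2]; exact hq₂ m
      have hy01 : lam01 B₁ B₂ y n = true := lam01_of_min _ _ y hmin2 n
      have hx01 : lam01 B₁ B₂ x n = true := (hlam false true).trans hy01
      have hmaxx : ∀ m, B₁.IsMaxEdge (x.1.val m) := fun m => by rw [hx1]; exact hp₁ m
      have hall : ∀ m, B₂.IsMinEdge (x.2.val m) := by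
        intro m
        rcases le_or_gt m n with hm | hm
        · exact (lam01_eq_true_iff _ _ x hmaxx n).mp hx01 m hm
        · have h := (hRn m hm).2
          rw [h, hy2]; exact hq₂ m
      exact hq₂U ((hq₂uniq x.2 hall) ▸ hx2)
  · rcases hy with ⟨hy1, hy2⟩ | ⟨hy1, hy2⟩
    · -- x.1 ∈ U₁, x.2 = p₂, y.1 = q₁, y.2 ∈ U₂
      have hmax2 : ∀ m, B₂.IsMaxEdge (x.2.val m) := fun m => by rw [hx2]; exact hp₂ m
      have hx10 : lam10 B₁ B₂ x n = true := lam10_of_max _ _ x hmax2 n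
      have hy10 : lam10 B₁ B₂ y n = true := (hlam true false).symm.trans hx10
      have hminy : ∀ m, B₁.IsMinEdge (y.1.val m) := fun m => by rw [hy1]; exact hq₁ m
      have hall : ∀ m, B₂.IsMaxEdge (y.2.val m) := by
        intro m
        rcases le_or_gt m n with hm | hm
        · exact (lam10_eq_true_iff _ _ y hminy n).mp hy10 m hm
        · have h := (hRn m hm).2
          rw [← h, hx2]; exact hp₂ m
      exact hp₂U ((hp₂uniq y.2 hall) ▸ hy2)
    · -- x.2 = p₂, y.2 = q₂
      have h := (hRn (n + 1) le_rfl).2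
      rw [hx2, hy2] at h
      exact absurd (hq₂ (n + 1)) fun hm =>
        no_maxmin B₂ hedge₂ (q₂.val (n + 1)) (h ▸ hp₂ (n + 1)) hm
end

section
/- Assume that for every n ≥ 1, every i = 1,2 and every pair of vertices v ∈ V_{i,n-1}, w ∈ V_{i,n}, there are more than three edges e ∈ E_{i,n} with s(e) = v and r(e) = w, and that each B_i is properly ordered with unique maximal path p_i and unique minimal path q_i. Let U_i ⊆ X_i be clopen sets with p_i ∉ U_i and q_i ∉ U_i, set B = ({p₁} × U₂) ∪ (U₁ × {p₂}) and B* = ({q₁} × U₂) ∪ (U₁ × {q₂}), and define β : B → B* by β(p₁, x₂) = (q₁, x₂) for x₂ ∈ U₂ and β(x₁, p₂) = (x₁, q₂) for x₁ ∈ U₁. Then β is a bijection from B onto B*, and for all (x, y) ∈ B × B one has (x, y) ∈ R' if and only if (β(x), β(y)) ∈ R'; in particular β induces a bijection between R' ∩ (B × B) and R' ∩ (B* × B*). -/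
attribute [local instance] Classical.propDecidable

variable (B₁ B₂ : OrderedBratteli)

/-!
STATEMENT 9 (the paper's Lemma 2.7). With notation as in Lemma 2.6, the map
`β : B → B*` defined by `β(p₁, x₂) = (q₁, x₂)` and `β(x₁, p₂) = (x₁, q₂)` is a
bijection from `B` onto `B*`, and for `x, y ∈ B` one has `(x, y) ∈ R'` iff
`(β x, β y) ∈ R'`; in particular `β` induces a bijection between `R' ∩ (B × B)`
and `R' ∩ (B* × B*)`.
-/

/-- The map `β`, extended to all of `X = X₁ × X₂`: on `{p₁} × U₂` it replaces the
first coordinate by `q₁`, and elsewhere (in particular on `U₁ × {p₂}`) it replaces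
the second coordinate by `q₂`. -/
noncomputable def betaFun (p₁ q₁ : B₁.Path) (q₂ : B₂.Path) (U₂ : Set B₂.Path)
    (x : B₁.Path × B₂.Path) : B₁.Path × B₂.Path :=
  if x.1 = p₁ ∧ x.2 ∈ U₂ then (q₁, x.2) else (x.1, q₂)

/-! ### Auxiliary machinery -/

lemma maxEdge_ne_minEdge (B : OrderedBratteli)
    (hedge : ∀ (n : ℕ) (v : B.V n) (w : B.V (n + 1)),
      3 < Nat.card {e : B.E n // B.src n e = v ∧ B.rng n e = w})
    {n : ℕ} {e : B.E n} (hmax : B.IsMaxEdge e) (hmin : B.IsMinEdge e) : False := by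
  have h := hedge n (B.src n e) (B.rng n e)
  haveI : Finite (B.E n) := B.finE n
  haveI : Finite {e' : B.E n // B.src n e' = B.src n e ∧ B.rng n e' = B.rng n e} :=
    Subtype.finite
  have hnt : Nontrivial {e' : B.E n // B.src n e' = B.src n e ∧ B.rng n e' = B.rng n e} :=
    Finite.one_lt_card_iff_nontrivial.mp (by omega)
  obtain ⟨⟨a, _, ha⟩, ⟨b, _, hb⟩, hab⟩ := hnt
  have hae : a = e := B.le_antisymm n a e (hmax a ha) (hmin a ha)
  have hbe : b = e := B.le_antisymm n b e (hmax b hb) (hmin b hb)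
  exact hab (by simp [hae, hbe])

/-- A generic recursion capturing the common shape of the four `lam` functions. -/
def FB (f g : ℕ → Bool) : ℕ → Bool
  | 0 => f 0
  | n + 1 => if f (n + 1) then (if g (n + 1) then FB f g n else true) else false

lemma FB_f_true {f g : ℕ → Bool} (hf : ∀ n, f n = true) : ∀ n, FB f g n = true
  | 0 => hf 0
  | n + 1 => by simp [FB, hf, FB_f_true hf n]

lemma FB_f_false {f g : ℕ → Bool} (hf : ∀ n, f n = false) : ∀ n, FB f g n = false
  | 0 => hf 0
  | n + 1 => by simp [FB, hf]

lemma FB_g_false {f g : ℕ → Bool} (hg : ∀ n, g n = false) : ∀ n, FB f g n = f n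
  | 0 => rfl
  | n + 1 => by cases h : f (n + 1) <;> simp [FB, hg, h]

lemma FB_g_true {f g : ℕ → Bool} (hg : ∀ n, g n = true) :
    ∀ n, FB f g n = decide (∀ k ≤ n, f k = true)
  | 0 => by cases h0 : f 0 <;> simp [FB, h0, Nat.le_zero]
  | n + 1 => by
      rw [FB, hg, if_pos rfl, FB_g_true hg n]
      by_cases h : f (n + 1) = true
      · rw [h, if_pos rfl, decide_eq_decide]
        constructor
        · intro hall k hk
          rcases Nat.lt_succ_iff_lt_or_eq.mp (Nat.lt_succ_of_le hk) with hk' | hk'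
          · exact hall k (by omega)
          · rw [hk']; exact h
        · intro hall k hk; exact hall k (by omega)
      · rw [Bool.not_eq_true] at h
        rw [h, if_neg (by simp)]
        symm; rw [decide_eq_false_iff_not]
        intro hall; simp [hall (n + 1) le_rfl] at h

lemma lam00_eq_FB (x : B₁.Path × B₂.Path) :
    ∀ n, lam00 B₁ B₂ x n =
      FB (fun k => decide (B₁.IsMaxEdge (x.1.val k)))
        (fun k => decide (B₂.IsMaxEdge (x.2.val k))) n
  | 0 => by simp [lam00, FB]
  | n + 1 => by
      by_cases h1 : B₁.IsMaxEdge (x.1.val (n + 1)) <;>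
        by_cases h2 : B₂.IsMaxEdge (x.2.val (n + 1)) <;>
          simp [lam00, FB, h1, h2, lam00_eq_FB x n]

lemma lam01_eq_FB (x : B₁.Path × B₂.Path) :
    ∀ n, lam01 B₁ B₂ x n =
      FB (fun k => decide (B₂.IsMinEdge (x.2.val k)))
        (fun k => decide (B₁.IsMaxEdge (x.1.val k))) n
  | 0 => by simp [lam01, FB]
  | n + 1 => by
      by_cases h1 : B₁.IsMaxEdge (x.1.val (n + 1)) <;>
        by_cases h2 : B₂.IsMinEdge (x.2.val (n + 1)) <;>
          simp [lam01, FB, h1, h2, lam01_eq_FB x n]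

lemma lam11_eq_FB (x : B₁.Path × B₂.Path) :
    ∀ n, lam11 B₁ B₂ x n =
      FB (fun k => decide (B₁.IsMinEdge (x.1.val k)))
        (fun k => decide (B₂.IsMinEdge (x.2.val k))) n
  | 0 => by simp [lam11, FB]
  | n + 1 => by
      by_cases h1 : B₁.IsMinEdge (x.1.val (n + 1)) <;>
        by_cases h2 : B₂.IsMinEdge (x.2.val (n + 1)) <;>
          simp [lam11, FB, h1, h2, lam11_eq_FB x n]

lemma lam10_eq_FB (x : B₁.Path × B₂.Path) :
    ∀ n, lam10 B₁ B₂ x n =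
      FB (fun k => decide (B₂.IsMaxEdge (x.2.val k)))
        (fun k => decide (B₁.IsMinEdge (x.1.val k))) n
  | 0 => by simp [lam10, FB]
  | n + 1 => by
      by_cases h1 : B₁.IsMinEdge (x.1.val (n + 1)) <;>
        by_cases h2 : B₂.IsMaxEdge (x.2.val (n + 1)) <;>
          simp [lam10, FB, h1, h2, lam10_eq_FB x n]

lemma mem_RRel'_iff (n : ℕ) (x y : B₁.Path × B₂.Path) :
    (x, y) ∈ RRel' B₁ B₂ n ↔
      (∀ m, n + 1 ≤ m → x.1.val m = y.1.val m ∧ x.2.val m = y.2.val m) ∧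
      lam00 B₁ B₂ x n = lam00 B₁ B₂ y n ∧ lam01 B₁ B₂ x n = lam01 B₁ B₂ y n ∧
      lam11 B₁ B₂ x n = lam11 B₁ B₂ y n ∧ lam10 B₁ B₂ x n = lam10 B₁ B₂ y n := by
  constructor
  · rintro ⟨h1, h2⟩
    exact ⟨h1, h2 false false, h2 false true, h2 true true, h2 true false⟩
  · rintro ⟨h1, h00, h01, h11, h10⟩
    refine ⟨h1, ?_⟩
    intro i j
    cases i <;> cases j
    · exact h00
    · exact h01
    · exact h10
    · exact h11

lemma RRel'_symm {n : ℕ} {x y : B₁.Path × B₂.Path} (h : (x, y) ∈ RRel' B₁ B₂ n) :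
    (y, x) ∈ RRel' B₁ B₂ n := by
  rw [mem_RRel'_iff] at h ⊢
  exact ⟨fun m hm => ⟨(h.1 m hm).1.symm, (h.1 m hm).2.symm⟩, h.2.1.symm, h.2.2.1.symm,
    h.2.2.2.1.symm, h.2.2.2.2.symm⟩

theorem betaFun_bijOn_and_preserves_RRel'
    (hedge₁ : ∀ (n : ℕ) (v : B₁.V n) (w : B₁.V (n + 1)),
      3 < Nat.card {e : B₁.E n // B₁.src n e = v ∧ B₁.rng n e = w})
    (hedge₂ : ∀ (n : ℕ) (v : B₂.V n) (w : B₂.V (n + 1)),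
      3 < Nat.card {e : B₂.E n // B₂.src n e = v ∧ B₂.rng n e = w})
    (p₁ : B₁.Path) (hp₁ : ∀ n, B₁.IsMaxEdge (p₁.val n))
    (hp₁uniq : ∀ p : B₁.Path, (∀ n, B₁.IsMaxEdge (p.val n)) → p = p₁)
    (q₁ : B₁.Path) (hq₁ : ∀ n, B₁.IsMinEdge (q₁.val n))
    (hq₁uniq : ∀ q : B₁.Path, (∀ n, B₁.IsMinEdge (q.val n)) → q = q₁)
    (p₂ : B₂.Path) (hp₂ : ∀ n, B₂.IsMaxEdge (p₂.val n))
    (hp₂uniq : ∀ p : B₂.Path, (∀ n, B₂.IsMaxEdge (p.val n)) → p = p₂)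
    (q₂ : B₂.Path) (hq₂ : ∀ n, B₂.IsMinEdge (q₂.val n))
    (hq₂uniq : ∀ q : B₂.Path, (∀ n, B₂.IsMinEdge (q.val n)) → q = q₂)
    (U₁ : Set B₁.Path) (hU₁ : IsClopen U₁) (hp₁U : p₁ ∉ U₁) (hq₁U : q₁ ∉ U₁)
    (U₂ : Set B₂.Path) (hU₂ : IsClopen U₂) (hp₂U : p₂ ∉ U₂) (hq₂U : q₂ ∉ U₂) :
    Set.BijOn (betaFun B₁ B₂ p₁ q₁ q₂ U₂)
      (({p₁} : Set B₁.Path) ×ˢ U₂ ∪ U₁ ×ˢ ({p₂} : Set B₂.Path))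
      (({q₁} : Set B₁.Path) ×ˢ U₂ ∪ U₁ ×ˢ ({q₂} : Set B₂.Path)) ∧
    (∀ x ∈ (({p₁} : Set B₁.Path) ×ˢ U₂ ∪ U₁ ×ˢ ({p₂} : Set B₂.Path)),
      ∀ y ∈ (({p₁} : Set B₁.Path) ×ˢ U₂ ∪ U₁ ×ˢ ({p₂} : Set B₂.Path)),
        ((x, y) ∈ ⋃ n, RRel' B₁ B₂ n ↔
          (betaFun B₁ B₂ p₁ q₁ q₂ U₂ x, betaFun B₁ B₂ p₁ q₁ q₂ U₂ y) ∈
            ⋃ n, RRel' B₁ B₂ n)) ∧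
    Set.BijOn (Prod.map (betaFun B₁ B₂ p₁ q₁ q₂ U₂) (betaFun B₁ B₂ p₁ q₁ q₂ U₂))
      ((⋃ n, RRel' B₁ B₂ n) ∩
        ((({p₁} : Set B₁.Path) ×ˢ U₂ ∪ U₁ ×ˢ ({p₂} : Set B₂.Path)) ×ˢ
          (({p₁} : Set B₁.Path) ×ˢ U₂ ∪ U₁ ×ˢ ({p₂} : Set B₂.Path))))
      ((⋃ n, RRel' B₁ B₂ n) ∩
        ((({q₁} : Set B₁.Path) ×ˢ U₂ ∪ U₁ ×ˢ ({q₂} : Set B₂.Path)) ×ˢ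
          (({q₁} : Set B₁.Path) ×ˢ U₂ ∪ U₁ ×ˢ ({q₂} : Set B₂.Path)))) := by
  classical
  have hq₁nm : ∀ n, ¬ B₁.IsMaxEdge (q₁.val n) :=
    fun n h => maxEdge_ne_minEdge B₁ hedge₁ h (hq₁ n)
  have hp₁nm : ∀ n, ¬ B₁.IsMinEdge (p₁.val n) :=
    fun n h => maxEdge_ne_minEdge B₁ hedge₁ (hp₁ n) h
  have hq₂nm : ∀ n, ¬ B₂.IsMaxEdge (q₂.val n) :=
    fun n h => maxEdge_ne_minEdge B₂ hedge₂ h (hq₂ n)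
  have hp₂nm : ∀ n, ¬ B₂.IsMinEdge (p₂.val n) :=
    fun n h => maxEdge_ne_minEdge B₂ hedge₂ (hp₂ n) h
  have hexmax₁ : ∀ x : B₁.Path, x ≠ p₁ → ∃ k, ¬ B₁.IsMaxEdge (x.val k) := by
    intro x hx; by_contra h; push_neg at h
    exact hx (hp₁uniq x h)
  have hexmin₁ : ∀ x : B₁.Path, x ≠ q₁ → ∃ k, ¬ B₁.IsMinEdge (x.val k) := by
    intro x hx; by_contra h; push_neg at h
    exact hx (hq₁uniq x h)
  have hexmax₂ : ∀ x : B₂.Path, x ≠ p₂ → ∃ k, ¬ B₂.IsMaxEdge (x.val k) := by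
    intro x hx; by_contra h; push_neg at h
    exact hx (hp₂uniq x h)
  have hexmin₂ : ∀ x : B₂.Path, x ≠ q₂ → ∃ k, ¬ B₂.IsMinEdge (x.val k) := by
    intro x hx; by_contra h; push_neg at h
    exact hx (hq₂uniq x h)
  have hb1 : ∀ x : B₁.Path × B₂.Path, x.1 = p₁ → x.2 ∈ U₂ →
      betaFun B₁ B₂ p₁ q₁ q₂ U₂ x = (q₁, x.2) := by
    intro x h1 h2; simp [betaFun, h1, h2]
  have hb2 : ∀ x : B₁.Path × B₂.Path, x.1 ∈ U₁ →
      betaFun B₁ B₂ p₁ q₁ q₂ U₂ x = (x.1, q₂) := by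
    intro x h1
    have hne : ¬ (x.1 = p₁ ∧ x.2 ∈ U₂) := fun h => hp₁U (h.1 ▸ h1)
    simp [betaFun, hne]
  -- transfer lemmas
  have Afwd : ∀ x₂ ∈ U₂, ∀ y₂ ∈ U₂,
      (((p₁, x₂), (p₁, y₂)) : (B₁.Path × B₂.Path) × (B₁.Path × B₂.Path)) ∈
        (⋃ n, RRel' B₁ B₂ n) →
      (((q₁, x₂), (q₁, y₂)) : (B₁.Path × B₂.Path) × (B₁.Path × B₂.Path)) ∈
        ⋃ n, RRel' B₁ B₂ n := by
    intro x₂ hx₂ y₂ hy₂ h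
    rw [Set.mem_iUnion] at h ⊢
    obtain ⟨n, hn⟩ := h
    rw [mem_RRel'_iff] at hn
    obtain ⟨k₁, hk₁⟩ := hexmax₂ x₂ (fun h => hp₂U (h ▸ hx₂))
    obtain ⟨k₂, hk₂⟩ := hexmax₂ y₂ (fun h => hp₂U (h ▸ hy₂))
    refine ⟨n + 1 + k₁ + k₂, ?_⟩
    rw [mem_RRel'_iff]
    refine ⟨fun j hj => ⟨rfl, (hn.1 j (by omega)).2⟩, ?_, ?_, ?_, ?_⟩
    · rw [lam00_eq_FB, lam00_eq_FB, FB_f_false (fun k => by simp [hq₁nm k]),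
        FB_f_false (fun k => by simp [hq₁nm k])]
    · rw [lam01_eq_FB, lam01_eq_FB, FB_g_false (fun k => by simp [hq₁nm k]),
        FB_g_false (fun k => by simp [hq₁nm k])]
      have he := (hn.1 (n + 1 + k₁ + k₂) (by omega)).2
      simp only at he ⊢
      rw [he]
    · rw [lam11_eq_FB, lam11_eq_FB, FB_f_true (fun k => by simp [hq₁ k]),
        FB_f_true (fun k => by simp [hq₁ k])]
    · rw [lam10_eq_FB, lam10_eq_FB, FB_g_true (fun k => by simp [hq₁ k]),
        FB_g_true (fun k => by simp [hq₁ k])]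
      rw [decide_eq_false (fun hall => hk₁ (of_decide_eq_true (hall k₁ (by omega)))),
        decide_eq_false (fun hall => hk₂ (of_decide_eq_true (hall k₂ (by omega))))]
  have Abwd : ∀ x₂ ∈ U₂, ∀ y₂ ∈ U₂,
      (((q₁, x₂), (q₁, y₂)) : (B₁.Path × B₂.Path) × (B₁.Path × B₂.Path)) ∈
        (⋃ n, RRel' B₁ B₂ n) →
      (((p₁, x₂), (p₁, y₂)) : (B₁.Path × B₂.Path) × (B₁.Path × B₂.Path)) ∈
        ⋃ n, RRel' B₁ B₂ n := by
    intro x₂ hx₂ y₂ hy₂ h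
    rw [Set.mem_iUnion] at h ⊢
    obtain ⟨n, hn⟩ := h
    rw [mem_RRel'_iff] at hn
    obtain ⟨k₁, hk₁⟩ := hexmin₂ x₂ (fun h => hq₂U (h ▸ hx₂))
    obtain ⟨k₂, hk₂⟩ := hexmin₂ y₂ (fun h => hq₂U (h ▸ hy₂))
    refine ⟨n + 1 + k₁ + k₂, ?_⟩
    rw [mem_RRel'_iff]
    refine ⟨fun j hj => ⟨rfl, (hn.1 j (by omega)).2⟩, ?_, ?_, ?_, ?_⟩
    · rw [lam00_eq_FB, lam00_eq_FB, FB_f_true (fun k => by simp [hp₁ k]),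
        FB_f_true (fun k => by simp [hp₁ k])]
    · rw [lam01_eq_FB, lam01_eq_FB, FB_g_true (fun k => by simp [hp₁ k]),
        FB_g_true (fun k => by simp [hp₁ k])]
      rw [decide_eq_false (fun hall => hk₁ (of_decide_eq_true (hall k₁ (by omega)))),
        decide_eq_false (fun hall => hk₂ (of_decide_eq_true (hall k₂ (by omega))))]
    · rw [lam11_eq_FB, lam11_eq_FB, FB_f_false (fun k => by simp [hp₁nm k]),
        FB_f_false (fun k => by simp [hp₁nm k])]
    · rw [lam10_eq_FB, lam10_eq_FB, FB_g_false (fun k => by simp [hp₁nm k]),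
        FB_g_false (fun k => by simp [hp₁nm k])]
      have he := (hn.1 (n + 1 + k₁ + k₂) (by omega)).2
      simp only at he ⊢
      rw [he]
  have Bfwd : ∀ x₁ ∈ U₁, ∀ y₁ ∈ U₁,
      (((x₁, p₂), (y₁, p₂)) : (B₁.Path × B₂.Path) × (B₁.Path × B₂.Path)) ∈
        (⋃ n, RRel' B₁ B₂ n) →
      (((x₁, q₂), (y₁, q₂)) : (B₁.Path × B₂.Path) × (B₁.Path × B₂.Path)) ∈
        ⋃ n, RRel' B₁ B₂ n := by
    intro x₁ hx₁ y₁ hy₁ h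
    rw [Set.mem_iUnion] at h ⊢
    obtain ⟨n, hn⟩ := h
    rw [mem_RRel'_iff] at hn
    obtain ⟨k₁, hk₁⟩ := hexmin₁ x₁ (fun h => hq₁U (h ▸ hx₁))
    obtain ⟨k₂, hk₂⟩ := hexmin₁ y₁ (fun h => hq₁U (h ▸ hy₁))
    refine ⟨n + 1 + k₁ + k₂, ?_⟩
    rw [mem_RRel'_iff]
    refine ⟨fun j hj => ⟨(hn.1 j (by omega)).1, rfl⟩, ?_, ?_, ?_, ?_⟩
    · rw [lam00_eq_FB, lam00_eq_FB, FB_g_false (fun k => by simp [hq₂nm k]),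
        FB_g_false (fun k => by simp [hq₂nm k])]
      have he := (hn.1 (n + 1 + k₁ + k₂) (by omega)).1
      simp only at he ⊢
      rw [he]
    · rw [lam01_eq_FB, lam01_eq_FB, FB_f_true (fun k => by simp [hq₂ k]),
        FB_f_true (fun k => by simp [hq₂ k])]
    · rw [lam11_eq_FB, lam11_eq_FB, FB_g_true (fun k => by simp [hq₂ k]),
        FB_g_true (fun k => by simp [hq₂ k])]
      rw [decide_eq_false (fun hall => hk₁ (of_decide_eq_true (hall k₁ (by omega)))),
        decide_eq_false (fun hall => hk₂ (of_decide_eq_true (hall k₂ (by omega))))]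
    · rw [lam10_eq_FB, lam10_eq_FB, FB_f_false (fun k => by simp [hq₂nm k]),
        FB_f_false (fun k => by simp [hq₂nm k])]
  have Bbwd : ∀ x₁ ∈ U₁, ∀ y₁ ∈ U₁,
      (((x₁, q₂), (y₁, q₂)) : (B₁.Path × B₂.Path) × (B₁.Path × B₂.Path)) ∈
        (⋃ n, RRel' B₁ B₂ n) →
      (((x₁, p₂), (y₁, p₂)) : (B₁.Path × B₂.Path) × (B₁.Path × B₂.Path)) ∈
        ⋃ n, RRel' B₁ B₂ n := by
    intro x₁ hx₁ y₁ hy₁ h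
    rw [Set.mem_iUnion] at h ⊢
    obtain ⟨n, hn⟩ := h
    rw [mem_RRel'_iff] at hn
    obtain ⟨k₁, hk₁⟩ := hexmax₁ x₁ (fun h => hp₁U (h ▸ hx₁))
    obtain ⟨k₂, hk₂⟩ := hexmax₁ y₁ (fun h => hp₁U (h ▸ hy₁))
    refine ⟨n + 1 + k₁ + k₂, ?_⟩
    rw [mem_RRel'_iff]
    refine ⟨fun j hj => ⟨(hn.1 j (by omega)).1, rfl⟩, ?_, ?_, ?_, ?_⟩
    · rw [lam00_eq_FB, lam00_eq_FB, FB_g_true (fun k => by simp [hp₂ k]),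
        FB_g_true (fun k => by simp [hp₂ k])]
      rw [decide_eq_false (fun hall => hk₁ (of_decide_eq_true (hall k₁ (by omega)))),
        decide_eq_false (fun hall => hk₂ (of_decide_eq_true (hall k₂ (by omega))))]
    · rw [lam01_eq_FB, lam01_eq_FB, FB_f_false (fun k => by simp [hp₂nm k]),
        FB_f_false (fun k => by simp [hp₂nm k])]
    · rw [lam11_eq_FB, lam11_eq_FB, FB_g_false (fun k => by simp [hp₂nm k]),
        FB_g_false (fun k => by simp [hp₂nm k])]
      have he := (hn.1 (n + 1 + k₁ + k₂) (by omega)).1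
      simp only at he ⊢
      rw [he]
    · rw [lam10_eq_FB, lam10_eq_FB, FB_f_true (fun k => by simp [hp₂ k]),
        FB_f_true (fun k => by simp [hp₂ k])]
  -- mixed pairs are never related
  have C1 : ∀ x₂ ∈ U₂, ∀ y₁ ∈ U₁,
      (((p₁, x₂), (y₁, p₂)) : (B₁.Path × B₂.Path) × (B₁.Path × B₂.Path)) ∉
        ⋃ n, RRel' B₁ B₂ n := by
    intro x₂ hx₂ y₁ hy₁ h
    rw [Set.mem_iUnion] at h; obtain ⟨n, hn⟩ := h
    rw [mem_RRel'_iff] at hn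
    have h00 := hn.2.1
    rw [lam00_eq_FB, lam00_eq_FB, FB_f_true (fun k => by simp [hp₁ k]),
      FB_g_true (fun k => by simp [hp₂ k])] at h00
    have hall : ∀ k, B₁.IsMaxEdge (y₁.val k) := by
      intro k
      rcases le_or_gt k n with hk | hk
      · exact of_decide_eq_true ((of_decide_eq_true h00.symm) k hk)
      · have he := (hn.1 k (by omega)).1
        exact he ▸ hp₁ k
    exact hp₁U (hp₁uniq y₁ hall ▸ hy₁)
  have C1β : ∀ x₂ ∈ U₂, ∀ y₁ ∈ U₁,
      (((q₁, x₂), (y₁, q₂)) : (B₁.Path × B₂.Path) × (B₁.Path × B₂.Path)) ∉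
        ⋃ n, RRel' B₁ B₂ n := by
    intro x₂ hx₂ y₁ hy₁ h
    rw [Set.mem_iUnion] at h; obtain ⟨n, hn⟩ := h
    rw [mem_RRel'_iff] at hn
    have h11 := hn.2.2.2.1
    rw [lam11_eq_FB, lam11_eq_FB, FB_f_true (fun k => by simp [hq₁ k]),
      FB_g_true (fun k => by simp [hq₂ k])] at h11
    have hall : ∀ k, B₁.IsMinEdge (y₁.val k) := by
      intro k
      rcases le_or_gt k n with hk | hk
      · exact of_decide_eq_true ((of_decide_eq_true h11.symm) k hk)
      · have he := (hn.1 k (by omega)).1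
        exact he ▸ hq₁ k
    exact hq₁U (hq₁uniq y₁ hall ▸ hy₁)
  have symmU : ∀ a b : B₁.Path × B₂.Path, (a, b) ∈ (⋃ n, RRel' B₁ B₂ n) →
      (b, a) ∈ ⋃ n, RRel' B₁ B₂ n := by
    intro a b h
    rw [Set.mem_iUnion] at h ⊢
    obtain ⟨n, hn⟩ := h
    exact ⟨n, RRel'_symm B₁ B₂ hn⟩
  -- the key equivalence
  have key : ∀ x ∈ (({p₁} : Set B₁.Path) ×ˢ U₂ ∪ U₁ ×ˢ ({p₂} : Set B₂.Path)),
      ∀ y ∈ (({p₁} : Set B₁.Path) ×ˢ U₂ ∪ U₁ ×ˢ ({p₂} : Set B₂.Path)),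
        ((x, y) ∈ (⋃ n, RRel' B₁ B₂ n) ↔
          (betaFun B₁ B₂ p₁ q₁ q₂ U₂ x, betaFun B₁ B₂ p₁ q₁ q₂ U₂ y) ∈
            ⋃ n, RRel' B₁ B₂ n) := by
    rintro ⟨x₁, x₂⟩ hx ⟨y₁, y₂⟩ hy
    simp only [Set.mem_union, Set.mem_prod, Set.mem_singleton_iff] at hx hy
    rcases hx with ⟨hx1, hx2⟩ | ⟨hx1, hx2⟩ <;> rcases hy with ⟨hy1, hy2⟩ | ⟨hy1, hy2⟩
    · have e1 : betaFun B₁ B₂ p₁ q₁ q₂ U₂ (x₁, x₂) = (q₁, x₂) := hb1 (x₁, x₂) hx1 hx2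
      have e2 : betaFun B₁ B₂ p₁ q₁ q₂ U₂ (y₁, y₂) = (q₁, y₂) := hb1 (y₁, y₂) hy1 hy2
      rw [e1, e2, hx1, hy1]
      exact ⟨Afwd x₂ hx2 y₂ hy2, Abwd x₂ hx2 y₂ hy2⟩
    · have e1 : betaFun B₁ B₂ p₁ q₁ q₂ U₂ (x₁, x₂) = (q₁, x₂) := hb1 (x₁, x₂) hx1 hx2
      have e2 : betaFun B₁ B₂ p₁ q₁ q₂ U₂ (y₁, y₂) = (y₁, q₂) := hb2 (y₁, y₂) hy1
      rw [e1, e2, hx1, hy2]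
      constructor
      · intro h; exact absurd h (C1 x₂ hx2 y₁ hy1)
      · intro h; exact absurd h (C1β x₂ hx2 y₁ hy1)
    · have e1 : betaFun B₁ B₂ p₁ q₁ q₂ U₂ (x₁, x₂) = (x₁, q₂) := hb2 (x₁, x₂) hx1
      have e2 : betaFun B₁ B₂ p₁ q₁ q₂ U₂ (y₁, y₂) = (q₁, y₂) := hb1 (y₁, y₂) hy1 hy2
      rw [e1, e2, hx2, hy1]
      constructor
      · intro h; exact absurd (symmU _ _ h) (C1 y₂ hy2 x₁ hx1)
      · intro h; exact absurd (symmU _ _ h) (C1β y₂ hy2 x₁ hx1)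
    · have e1 : betaFun B₁ B₂ p₁ q₁ q₂ U₂ (x₁, x₂) = (x₁, q₂) := hb2 (x₁, x₂) hx1
      have e2 : betaFun B₁ B₂ p₁ q₁ q₂ U₂ (y₁, y₂) = (y₁, q₂) := hb2 (y₁, y₂) hy1
      rw [e1, e2, hx2, hy2]
      exact ⟨Bfwd x₁ hx1 y₁ hy1, Bbwd x₁ hx1 y₁ hy1⟩
  -- the bijection B → B*
  have hmap : ∀ x ∈ (({p₁} : Set B₁.Path) ×ˢ U₂ ∪ U₁ ×ˢ ({p₂} : Set B₂.Path)),
      betaFun B₁ B₂ p₁ q₁ q₂ U₂ x ∈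
        (({q₁} : Set B₁.Path) ×ˢ U₂ ∪ U₁ ×ˢ ({q₂} : Set B₂.Path)) := by
    rintro ⟨x₁, x₂⟩ hx
    simp only [Set.mem_union, Set.mem_prod, Set.mem_singleton_iff] at hx
    rcases hx with ⟨hx1, hx2⟩ | ⟨hx1, hx2⟩
    · have e1 : betaFun B₁ B₂ p₁ q₁ q₂ U₂ (x₁, x₂) = (q₁, x₂) := hb1 (x₁, x₂) hx1 hx2
      rw [e1]; exact Or.inl ⟨rfl, hx2⟩
    · have e1 : betaFun B₁ B₂ p₁ q₁ q₂ U₂ (x₁, x₂) = (x₁, q₂) := hb2 (x₁, x₂) hx1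
      rw [e1]; exact Or.inr ⟨hx1, rfl⟩
  have hinj : ∀ x ∈ (({p₁} : Set B₁.Path) ×ˢ U₂ ∪ U₁ ×ˢ ({p₂} : Set B₂.Path)),
      ∀ y ∈ (({p₁} : Set B₁.Path) ×ˢ U₂ ∪ U₁ ×ˢ ({p₂} : Set B₂.Path)),
        betaFun B₁ B₂ p₁ q₁ q₂ U₂ x = betaFun B₁ B₂ p₁ q₁ q₂ U₂ y → x = y := by
    rintro ⟨x₁, x₂⟩ hx ⟨y₁, y₂⟩ hy h
    simp only [Set.mem_union, Set.mem_prod, Set.mem_singleton_iff] at hx hy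
    rcases hx with ⟨hx1, hx2⟩ | ⟨hx1, hx2⟩ <;> rcases hy with ⟨hy1, hy2⟩ | ⟨hy1, hy2⟩
    · rw [hb1 (x₁, x₂) hx1 hx2, hb1 (y₁, y₂) hy1 hy2] at h
      have h2 : x₂ = y₂ := congrArg Prod.snd h
      have h1 : x₁ = y₁ := hx1.trans hy1.symm
      rw [h1, h2]
    · rw [hb1 (x₁, x₂) hx1 hx2, hb2 (y₁, y₂) hy1] at h
      have he : q₁ = y₁ := congrArg Prod.fst h
      exact absurd (show q₁ ∈ U₁ by rw [he]; exact hy1) hq₁U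
    · rw [hb2 (x₁, x₂) hx1, hb1 (y₁, y₂) hy1 hy2] at h
      have he : x₁ = q₁ := congrArg Prod.fst h
      exact absurd (show q₁ ∈ U₁ by rw [← he]; exact hx1) hq₁U
    · rw [hb2 (x₁, x₂) hx1, hb2 (y₁, y₂) hy1] at h
      have h1 : x₁ = y₁ := congrArg Prod.fst h
      have h2 : x₂ = y₂ := hx2.trans hy2.symm
      rw [h1, h2]
  have hsurj : ∀ z ∈ (({q₁} : Set B₁.Path) ×ˢ U₂ ∪ U₁ ×ˢ ({q₂} : Set B₂.Path)),
      ∃ x ∈ (({p₁} : Set B₁.Path) ×ˢ U₂ ∪ U₁ ×ˢ ({p₂} : Set B₂.Path)),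
        betaFun B₁ B₂ p₁ q₁ q₂ U₂ x = z := by
    rintro ⟨z₁, z₂⟩ hz
    simp only [Set.mem_union, Set.mem_prod, Set.mem_singleton_iff] at hz
    rcases hz with ⟨hz1, hz2⟩ | ⟨hz1, hz2⟩
    · refine ⟨(p₁, z₂), Or.inl ⟨rfl, hz2⟩, ?_⟩
      have hbeq : betaFun B₁ B₂ p₁ q₁ q₂ U₂ (p₁, z₂) = (q₁, z₂) := hb1 (p₁, z₂) rfl hz2
      rw [hbeq, hz1]
    · refine ⟨(z₁, p₂), Or.inr ⟨hz1, rfl⟩, ?_⟩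
      have hbeq : betaFun B₁ B₂ p₁ q₁ q₂ U₂ (z₁, p₂) = (z₁, q₂) := hb2 (z₁, p₂) hz1
      rw [hbeq, hz2]
  refine ⟨⟨hmap, hinj, fun z hz => ?_⟩, key, ?_, ?_, ?_⟩
  · obtain ⟨x, hxB, hxz⟩ := hsurj z hz
    exact ⟨x, hxB, hxz⟩
  · rintro ⟨x, y⟩ ⟨hr, hx, hy⟩
    exact ⟨(key x hx y hy).mp hr, hmap x hx, hmap y hy⟩
  · rintro ⟨x, y⟩ ⟨_, hx, hy⟩ ⟨x', y'⟩ ⟨_, hx', hy'⟩ h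
    have h1 := congrArg Prod.fst h
    have h2 := congrArg Prod.snd h
    exact Prod.ext (hinj x hx x' hx' h1) (hinj y hy y' hy' h2)
  · rintro ⟨u, v⟩ ⟨hr, hu, hv⟩
    obtain ⟨x, hxB, hxu⟩ := hsurj u hu
    obtain ⟨y, hyB, hyv⟩ := hsurj v hv
    refine ⟨(x, y), ⟨(key x hxB y hyB).mpr ?_, hxB, hyB⟩, ?_⟩
    · rw [hxu, hyv]; exact hr
    · show (betaFun B₁ B₂ p₁ q₁ q₂ U₂ x, betaFun B₁ B₂ p₁ q₁ q₂ U₂ y) = (u, v)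
      rw [hxu, hyv]
end

section
/- Let π : (Y, ψ) → (X, φ) be a factor map between Cantor minimal ℤ²-systems. Suppose R̂_n ⊆ R̂_{n+1} (n ∈ ℕ) is an increasing sequence of compact open subsets of X × ℤ² such that each R_n = {(x, φ^a(x)) : (x,a) ∈ R̂_n} is an equivalence relation on X. Then the sets Ŝ_n = {(y,a) ∈ Y × ℤ² : (π(y), a) ∈ R̂_n} form an increasing sequence of compact open subsets of Y × ℤ², each S_n = {(y, ψ^a(y)) : (y,a) ∈ Ŝ_n} is an equivalence relation on Y, and ⋃_n S_n = {(y,y') ∈ R_ψ : (π(y), π(y')) ∈ ⋃_n R_n}. -/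
/-- A free minimal action of `ℤ²` by homeomorphisms on a topological space `X`
(the data of a Cantor minimal `ℤ²`-system, the Cantor-set conditions on `X` being
carried separately). -/
structure Z2System (X : Type) [TopologicalSpace X] where
  act : ℤ × ℤ → X → X
  continuous_act : ∀ a, Continuous (act a)
  act_zero : ∀ x, act 0 x = x
  act_add : ∀ a b x, act (a + b) x = act a (act b x)
  free : ∀ a x, act a x = x → a = 0
  minimal : ∀ x, Dense (Set.range fun a => act a x)

/-- The orbit equivalence relation `R_φ = {(x, φ^a(x)) : x ∈ X, a ∈ ℤ²}`. -/
def Z2System.orbitRel {X : Type} [TopologicalSpace X] (φ : Z2System X) : Set (X × X) :=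
  {p | ∃ a : ℤ × ℤ, p.2 = φ.act a p.1}

/-- The subset of `X × X` presented by a set `R̂ ⊆ X × ℤ²`, namely
`{(x, φ^a(x)) : (x, a) ∈ R̂}`. -/
def Z2System.relOf {X : Type} [TopologicalSpace X] (φ : Z2System X)
    (Rhat : Set (X × (ℤ × ℤ))) : Set (X × X) :=
  {p | ∃ a : ℤ × ℤ, (p.1, a) ∈ Rhat ∧ p.2 = φ.act a p.1}

/-- The lift `Ŝ = {(y, a) : (π(y), a) ∈ R̂}` of a set `R̂ ⊆ X × ℤ²` along `π : Y → X`. -/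
def liftHat {X Y : Type} (π : Y → X) (Rhat : Set (X × (ℤ × ℤ))) : Set (Y × (ℤ × ℤ)) :=
  {q | (π q.1, q.2) ∈ Rhat}

/-!
STATEMENT 11 (the paper's Lemma 3.1 (2), in presentation form). If `(R̂_n)` is an
increasing sequence of compact open subsets of `X × ℤ²` each presenting an
equivalence relation `R_n` on `X`, then the lifts `Ŝ_n = {(y,a) : (π(y),a) ∈ R̂_n}`
form an increasing sequence of compact open subsets of `Y × ℤ²`, each presenting an
equivalence relation `S_n` on `Y`, and
`⋃ n, S_n = {(y,y') ∈ R_ψ : (π(y), π(y')) ∈ ⋃ n, R_n}`.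
-/

lemma Z2System.act_cancel {X : Type} [TopologicalSpace X] (φ : Z2System X)
    (a b : ℤ × ℤ) (x : X) (h : φ.act a x = φ.act b x) : a = b := by
  have h2 : φ.act (-b + a) x = x := by
    rw [φ.act_add, h, ← φ.act_add, neg_add_cancel, φ.act_zero]
  exact (neg_add_eq_zero.mp (φ.free _ _ h2)).symm

theorem lift_of_AF_presentation
    {X Y : Type} [TopologicalSpace X] [TopologicalSpace Y]
    -- X and Y are Cantor sets
    [Nonempty X] [CompactSpace X] [TopologicalSpace.MetrizableSpace X]
    [TotallyDisconnectedSpace X] (hX : ∀ x : X, ¬ IsOpen ({x} : Set X))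
    [Nonempty Y] [CompactSpace Y] [TopologicalSpace.MetrizableSpace Y]
    [TotallyDisconnectedSpace Y] (hY : ∀ y : Y, ¬ IsOpen ({y} : Set Y))
    (φ : Z2System X) (ψ : Z2System Y)
    -- π is a factor map
    (π : Y → X) (hπcont : Continuous π) (hπsurj : Function.Surjective π)
    (hπequiv : ∀ (a : ℤ × ℤ) (y : Y), π (ψ.act a y) = φ.act a (π y))
    (Rhat : ℕ → Set (X × (ℤ × ℤ)))
    (hRmono : ∀ n, Rhat n ⊆ Rhat (n + 1))
    (hRcompact : ∀ n, IsCompact (Rhat n)) (hRopen : ∀ n, IsOpen (Rhat n))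
    (hRequiv : ∀ n, IsEquivSetRel (φ.relOf (Rhat n))) :
    (∀ n, liftHat π (Rhat n) ⊆ liftHat π (Rhat (n + 1))) ∧
    (∀ n, IsCompact (liftHat π (Rhat n))) ∧
    (∀ n, IsOpen (liftHat π (Rhat n))) ∧
    (∀ n, IsEquivSetRel (ψ.relOf (liftHat π (Rhat n)))) ∧
    (⋃ n, ψ.relOf (liftHat π (Rhat n))) =
      {p : Y × Y | p ∈ ψ.orbitRel ∧ (π p.1, π p.2) ∈ ⋃ n, φ.relOf (Rhat n)} := by
  have key : ∀ n (y y' : Y), (y, y') ∈ ψ.relOf (liftHat π (Rhat n)) ↔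
      (∃ a : ℤ × ℤ, y' = ψ.act a y) ∧ (π y, π y') ∈ φ.relOf (Rhat n) := by
    intro n y y'
    constructor
    · rintro ⟨a, ha, h2⟩
      exact ⟨⟨a, h2⟩, ⟨a, ha, by simp only [] at h2 ⊢; rw [h2]; exact hπequiv a y⟩⟩
    · rintro ⟨⟨a, rfl⟩, ⟨b, hb, hb2⟩⟩
      have : φ.act a (π y) = φ.act b (π y) := by
        rw [← hπequiv]; exact hb2
      have hab := φ.act_cancel a b (π y) this
      exact ⟨a, by rwa [hab], rfl⟩
  refine ⟨fun n q hq => hRmono n hq, ?_, ?_, ?_, ?_⟩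
  · intro n
    have hclosed : IsClosed (liftHat π (Rhat n)) := by
      have : liftHat π (Rhat n) = (fun q : Y × (ℤ × ℤ) => (π q.1, q.2)) ⁻¹' (Rhat n) := rfl
      rw [this]
      exact ((hRcompact n).isClosed).preimage ((hπcont.comp continuous_fst).prodMk continuous_snd)
    have hsub : liftHat π (Rhat n) ⊆ (Set.univ : Set Y) ×ˢ (Prod.snd '' Rhat n) := by
      rintro ⟨y, a⟩ hq
      exact ⟨trivial, ⟨(π y, a), hq, rfl⟩⟩
    exact (isCompact_univ.prod ((hRcompact n).image continuous_snd)).of_isClosed_subset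
      hclosed hsub
  · intro n
    have : liftHat π (Rhat n) = (fun q : Y × (ℤ × ℤ) => (π q.1, q.2)) ⁻¹' (Rhat n) := rfl
    rw [this]
    exact (hRopen n).preimage ((hπcont.comp continuous_fst).prodMk continuous_snd)
  · intro n
    obtain ⟨hrefl, hsymm, htrans⟩ := hRequiv n
    refine ⟨fun y => ?_, fun y y' h => ?_, fun y y' y'' h h' => ?_⟩
    · exact (key n y y).mpr ⟨⟨0, (ψ.act_zero y).symm⟩, hrefl (π y)⟩
    · obtain ⟨⟨a, rfl⟩, hR⟩ := (key n y _).mp h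
      exact (key n _ y).mpr ⟨⟨-a, by rw [← ψ.act_add, neg_add_cancel, ψ.act_zero]⟩,
        hsymm _ _ hR⟩
    · obtain ⟨⟨a, ha⟩, hR⟩ := (key n y y').mp h
      obtain ⟨⟨b, hb⟩, hR'⟩ := (key n y' y'').mp h'
      refine (key n y y'').mpr ⟨⟨b + a, ?_⟩, htrans _ _ _ hR hR'⟩
      rw [ψ.act_add, ← ha, ← hb]
  · ext ⟨y, y'⟩
    simp only [Set.mem_iUnion, Set.mem_setOf_eq]
    constructor
    · rintro ⟨n, h⟩
      obtain ⟨horb, hR⟩ := (key n y y').mp h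
      exact ⟨horb, n, hR⟩
    · rintro ⟨horb, n, hR⟩
      exact ⟨n, (key n y y').mpr ⟨horb, hR⟩⟩
end

section
/- Let (X₁, φ₁) and (X₂, φ₂) be Cantor minimal ℤ-systems, let X = X₁ × X₂ with the product ℤ²-action φ^{(n,m)}(x₁,x₂) = (φ₁ⁿ(x₁), φ₂ᵐ(x₂)), and let π : (Y, ψ) → (X, φ) be a factor map from a Cantor minimal ℤ²-system. Fix p_i ∈ X_i and clopen sets U_i ⊆ X_i with p_i ∉ U_i and φ_i(p_i) ∉ U_i (i = 1,2); set B = ({p₁} × U₂) ∪ (U₁ × {p₂}), B* = ({φ₁(p₁)} × U₂) ∪ (U₁ × {φ₂(p₂)}), C = π^{-1}(B) and C* = π^{-1}(B*). Define γ : C → C* by γ(y) = ψ^{(1,0)}(y) if π(y) ∈ {p₁} × U₂ and γ(y) = ψ^{(0,1)}(y) if π(y) ∈ U₁ × {p₂}. Then: (1) γ is a well-defined homeomorphism from C onto C*; and (2) if R' ⊆ R_φ is an equivalence relation on X such that for all x, x' ∈ B one has (x,x') ∈ R' if and only if (β(x), β(x')) ∈ R', where β : B → B* is given by β(p₁,x₂)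 = (φ₁(p₁), x₂) and β(x₁,p₂) = (x₁, φ₂(p₂)), then for S = {(y,y') ∈ R_ψ : (π(y),π(y')) ∈ R'} and all y, y' ∈ C, (y,y') ∈ S if and only if (γ(y), γ(y')) ∈ S; in particular γ induces a bijection between S ∩ (C × C) and S ∩ (C* × C*). -/
attribute [local instance] Classical.propDecidable

/-- The product `ℤ²`-action of two homeomorphisms:
`φ^(n,m)(x₁,x₂) = (φ₁^n x₁, φ₂^m x₂)`. -/
def prodAct {X₁ X₂ : Type} (φ₁ : Equiv.Perm X₁) (φ₂ : Equiv.Perm X₂)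
    (a : ℤ × ℤ) (x : X₁ × X₂) : X₁ × X₂ :=
  ((φ₁ ^ a.1) x.1, (φ₂ ^ a.2) x.2)

open Set

theorem Set.InvOn.bijOn_prodMap_inter {α β : Type*} {f : α → β} {g : β → α} {s : Set α}
    {t : Set β} {S : Set (α × α)} {T : Set (β × β)} (hinv : InvOn g f s t) (hf : MapsTo f s t)
    (hg : MapsTo g t s) (hST : ∀ x ∈ s, ∀ x' ∈ s, ((x, x') ∈ S ↔ (f x, f x') ∈ T)) :
    BijOn (Prod.map f f) (S ∩ s ×ˢ s) (T ∩ t ×ˢ t) := by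
  refine InvOn.bijOn (f' := Prod.map g g)
    ((hinv.prodMap hinv).mono inter_subset_right inter_subset_right) ?_ ?_
  · rintro ⟨x, x'⟩ ⟨hS, hx, hx'⟩
    exact ⟨(hST x hx x' hx').1 hS, hf hx, hf hx'⟩
  · rintro ⟨z, z'⟩ ⟨hT, hz, hz'⟩
    refine ⟨(hST _ (hg hz) _ (hg hz')).2 ?_, hg hz, hg hz'⟩
    rwa [hinv.2 hz, hinv.2 hz']

namespace Z2System

variable {Y : Type} [TopologicalSpace Y] (ψ : Z2System Y)

theorem act_neg_act (a : ℤ × ℤ) (y : Y) : ψ.act (-a) (ψ.act a y) = y := by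
  rw [← ψ.act_add, neg_add_cancel, ψ.act_zero]

theorem orbitRel_act_left_iff {a : ℤ × ℤ} {y z : Y} :
    (ψ.act a y, z) ∈ ψ.orbitRel ↔ (y, z) ∈ ψ.orbitRel := by
  constructor
  · rintro ⟨b, hb⟩
    exact ⟨b + a, by rw [ψ.act_add]; exact hb⟩
  · rintro ⟨b, hb⟩
    refine ⟨b - a, ?_⟩
    simp only at hb ⊢
    rw [hb, sub_eq_add_neg, ψ.act_add, act_neg_act]

theorem orbitRel_act_right_iff {a : ℤ × ℤ} {y z : Y} :
    (y, ψ.act a z) ∈ ψ.orbitRel ↔ (y, z) ∈ ψ.orbitRel := by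
  constructor
  · rintro ⟨b, hb⟩
    refine ⟨-a + b, ?_⟩
    simp only at hb ⊢
    rw [ψ.act_add, ← hb, act_neg_act]
  · rintro ⟨b, hb⟩
    refine ⟨a + b, ?_⟩
    simp only at hb ⊢
    rw [hb, ψ.act_add]

noncomputable def shiftOn (s : Set Y) (a b : ℤ × ℤ) (y : Y) : Y :=
  if y ∈ s then ψ.act a y else ψ.act b y

theorem exists_shiftOn_eq_act (s : Set Y) (a b : ℤ × ℤ) (y : Y) :
    ∃ c, ψ.shiftOn s a b y = ψ.act c y := by
  unfold shiftOn
  split_ifs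
  exacts [⟨a, rfl⟩, ⟨b, rfl⟩]

theorem orbitRel_shiftOn_iff (s : Set Y) (a b : ℤ × ℤ) {y z : Y} :
    (ψ.shiftOn s a b y, ψ.shiftOn s a b z) ∈ ψ.orbitRel ↔ (y, z) ∈ ψ.orbitRel := by
  obtain ⟨c, hc⟩ := ψ.exists_shiftOn_eq_act s a b y
  obtain ⟨c', hc'⟩ := ψ.exists_shiftOn_eq_act s a b z
  rw [hc, hc', orbitRel_act_left_iff, orbitRel_act_right_iff]

theorem orbitRel_and_rel_shiftOn_iff {X : Type} {π : Y → X} {β : X → X} {R : Set (X × X)}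
    {B : Set X} {s : Set Y} {a b : ℤ × ℤ} (hπ : ∀ y, π y ∈ B → π (ψ.shiftOn s a b y) = β (π y))
    (hβR : ∀ x ∈ B, ∀ x' ∈ B, ((x, x') ∈ R ↔ (β x, β x') ∈ R)) {y y' : Y}
    (hy : π y ∈ B) (hy' : π y' ∈ B) :
    ((y, y') ∈ ψ.orbitRel ∧ (π y, π y') ∈ R) ↔
      ((ψ.shiftOn s a b y, ψ.shiftOn s a b y') ∈ ψ.orbitRel ∧
        (π (ψ.shiftOn s a b y), π (ψ.shiftOn s a b y')) ∈ R) := by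
  rw [orbitRel_shiftOn_iff, hπ y hy, hπ y' hy', hβR _ hy _ hy']

variable {ψ} {s t s' t' : Set Y} {a b : ℤ × ℤ} {y : Y}

theorem shiftOn_of_mem (h : y ∈ s) : ψ.shiftOn s a b y = ψ.act a y := if_pos h

theorem shiftOn_of_notMem (h : y ∉ s) : ψ.shiftOn s a b y = ψ.act b y := if_neg h

theorem continuousOn_shiftOn (hs : IsClosed s) (ht : IsClosed t) (hst : Disjoint s t) :
    ContinuousOn (ψ.shiftOn s a b) (s ∪ t) :=
  ((ψ.continuous_act a).continuousOn.congr fun _ hy => shiftOn_of_mem hy).union_of_isClosed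
    ((ψ.continuous_act b).continuousOn.congr fun _ hy =>
      shiftOn_of_notMem (hst.notMem_of_mem_right hy)) hs ht

theorem mapsTo_shiftOn (has : MapsTo (ψ.act a) s s') (hbt : MapsTo (ψ.act b) t t')
    (hst : Disjoint s t) : MapsTo (ψ.shiftOn s a b) (s ∪ t) (s' ∪ t') := by
  rintro y (hy | hy)
  · rw [shiftOn_of_mem hy]
    exact Or.inl (has hy)
  · rw [shiftOn_of_notMem (hst.notMem_of_mem_right hy)]
    exact Or.inr (hbt hy)

theorem leftInvOn_shiftOn (has : MapsTo (ψ.act a) s s') (hbt : MapsTo (ψ.act b) t t')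
    (hst : Disjoint s t) (hst' : Disjoint s' t') :
    LeftInvOn (ψ.shiftOn s' (-a) (-b)) (ψ.shiftOn s a b) (s ∪ t) := by
  rintro y (hy | hy)
  · rw [shiftOn_of_mem hy, shiftOn_of_mem (has hy), act_neg_act]
  · rw [shiftOn_of_notMem (hst.notMem_of_mem_right hy),
      shiftOn_of_notMem (hst'.notMem_of_mem_right (hbt hy)), act_neg_act]

noncomputable def shiftPartialHomeomorph (hs : IsClosed s) (ht : IsClosed t) (hs' : IsClosed s')
    (ht' : IsClosed t') (hst : Disjoint s t) (hst' : Disjoint s' t')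
    (has : MapsTo (ψ.act a) s s') (hbt : MapsTo (ψ.act b) t t')
    (has' : MapsTo (ψ.act (-a)) s' s) (hbt' : MapsTo (ψ.act (-b)) t' t) :
    PartialHomeomorph Y Y where
  toFun := ψ.shiftOn s a b
  invFun := ψ.shiftOn s' (-a) (-b)
  source := s ∪ t
  target := s' ∪ t'
  map_source' := mapsTo_shiftOn has hbt hst
  map_target' := mapsTo_shiftOn has' hbt' hst'
  left_inv' := leftInvOn_shiftOn has hbt hst hst'
  right_inv' := by
    have h := leftInvOn_shiftOn has' hbt' hst' hst
    rwa [neg_neg, neg_neg] at h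
  continuousOn_toFun := continuousOn_shiftOn hs ht hst
  continuousOn_invFun := continuousOn_shiftOn hs' ht' hst'

end Z2System

section Product

variable {X₁ X₂ Y : Type} [TopologicalSpace Y] {φ₁ : Equiv.Perm X₁} {φ₂ : Equiv.Perm X₂}
  {ψ : Z2System Y} {π : Y → X₁ × X₂} {p₁ : X₁} {p₂ : X₂} {U₁ : Set X₁} {U₂ : Set X₂}

theorem mapsTo_act_preimage_prod (hπ : ∀ a y, π (ψ.act a y) = prodAct φ₁ φ₂ a (π y))
    (a : ℤ × ℤ) {s₁ t₁ : Set X₁} {s₂ t₂ : Set X₂} (h₁ : MapsTo ⇑(φ₁ ^ a.1) s₁ t₁)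
    (h₂ : MapsTo ⇑(φ₂ ^ a.2) s₂ t₂) : MapsTo (ψ.act a) (π ⁻¹' s₁ ×ˢ s₂) (π ⁻¹' t₁ ×ˢ t₂) :=
  Function.Semiconj.mapsTo_preimage (hπ a) (h₁.prodMap h₂)

theorem map_shiftOn_of_mem_union (hπ : ∀ a y, π (ψ.act a y) = prodAct φ₁ φ₂ a (π y))
    {β : X₁ × X₂ → X₁ × X₂}
    (hβ : ∀ x, β x = if x ∈ ({p₁} : Set X₁) ×ˢ U₂ then (φ₁ p₁, x.2) else (x.1, φ₂ p₂))
    {y : Y} (hy : π y ∈ ({p₁} : Set X₁) ×ˢ U₂ ∪ U₁ ×ˢ ({p₂} : Set X₂)) :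
    π (ψ.shiftOn (π ⁻¹' ({p₁} : Set X₁) ×ˢ U₂) (1, 0) (0, 1) y) = β (π y) := by
  rw [hβ]
  by_cases h : π y ∈ ({p₁} : Set X₁) ×ˢ U₂
  · rw [Z2System.shiftOn_of_mem (mem_preimage.2 h), hπ, if_pos h]
    simp [prodAct, mem_singleton_iff.1 h.1]
  · obtain ⟨-, h₂⟩ := hy.resolve_left h
    rw [Z2System.shiftOn_of_notMem (fun h' => h (mem_preimage.1 h')), hπ, if_neg h]
    simp [prodAct, mem_singleton_iff.1 h₂]

variable [TopologicalSpace X₁] [TopologicalSpace X₂] [T1Space X₁] [T1Space X₂]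

noncomputable def gammaPartialHomeomorph (hπc : Continuous π)
    (hπ : ∀ a y, π (ψ.act a y) = prodAct φ₁ φ₂ a (π y)) (hU₁ : IsClosed U₁) (hU₂ : IsClosed U₂)
    (hp₁ : p₁ ∉ U₁) (hφp₁ : φ₁ p₁ ∉ U₁) : PartialHomeomorph Y Y :=
  Z2System.shiftPartialHomeomorph (s := π ⁻¹' ({p₁} : Set X₁) ×ˢ U₂)
    (t := π ⁻¹' U₁ ×ˢ ({p₂} : Set X₂)) (s' := π ⁻¹' ({φ₁ p₁} : Set X₁) ×ˢ U₂)
    (t' := π ⁻¹' U₁ ×ˢ ({φ₂ p₂} : Set X₂))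
    ((isClosed_singleton.prod hU₂).preimage hπc) ((hU₁.prod isClosed_singleton).preimage hπc)
    ((isClosed_singleton.prod hU₂).preimage hπc) ((hU₁.prod isClosed_singleton).preimage hπc)
    ((disjoint_prod.2 (.inl (disjoint_singleton_left.2 hp₁))).preimage π)
    ((disjoint_prod.2 (.inl (disjoint_singleton_left.2 hφp₁))).preimage π)
    (mapsTo_act_preimage_prod hπ (1, 0) (by simp) (by simp [mapsTo_id]))
    (mapsTo_act_preimage_prod hπ (0, 1) (by simp [mapsTo_id]) (by simp))
    (mapsTo_act_preimage_prod hπ _ (by simp) (by simp [mapsTo_id]))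
    (mapsTo_act_preimage_prod hπ _ (by simp [mapsTo_id]) (by simp))

end Product

theorem gamma_homeomorphism_and_preserves_S_general
    {X₁ X₂ Y : Type} [TopologicalSpace X₁] [TopologicalSpace X₂] [TopologicalSpace Y]
    [TopologicalSpace.MetrizableSpace X₁] [TopologicalSpace.MetrizableSpace X₂]
    -- (X₁, φ₁) and (X₂, φ₂) are Cantor minimal ℤ-systems
    (φ₁ : Equiv.Perm X₁) (φ₂ : Equiv.Perm X₂)
    -- (Y, ψ) is a Cantor minimal ℤ²-system and π a factor map onto (X₁ × X₂, φ)
    (ψ : Z2System Y)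
    (π : Y → X₁ × X₂) (hπcont : Continuous π)
    (hπequiv : ∀ (a : ℤ × ℤ) (y : Y), π (ψ.act a y) = prodAct φ₁ φ₂ a (π y))
    -- the points pᵢ and the clopen sets Uᵢ
    (p₁ : X₁) (p₂ : X₂)
    (U₁ : Set X₁) (hU₁ : IsClopen U₁) (hp₁U : p₁ ∉ U₁) (hφp₁U : φ₁ p₁ ∉ U₁)
    (U₂ : Set X₂) (hU₂ : IsClopen U₂)
    -- the sets B, B*, C = π⁻¹(B), C* = π⁻¹(B*)
    (B Bstar : Set (X₁ × X₂))
    (hB : B = ({p₁} : Set X₁) ×ˢ U₂ ∪ U₁ ×ˢ ({p₂} : Set X₂))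
    (hBstar : Bstar = ({φ₁ p₁} : Set X₁) ×ˢ U₂ ∪ U₁ ×ˢ ({φ₂ p₂} : Set X₂))
    (C Cstar : Set Y) (hC : C = π ⁻¹' B) (hCstar : Cstar = π ⁻¹' Bstar)
    -- the maps γ and β
    (γ : Y → Y)
    (hγ : ∀ y : Y, γ y = if π y ∈ ({p₁} : Set X₁) ×ˢ U₂ then ψ.act ((1, 0) : ℤ × ℤ) y
      else ψ.act ((0, 1) : ℤ × ℤ) y)
    (β : X₁ × X₂ → X₁ × X₂)
    (hβ : ∀ x : X₁ × X₂, β x = if x ∈ ({p₁} : Set X₁) ×ˢ U₂ then (φ₁ p₁, x.2)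
      else (x.1, φ₂ p₂))
    -- the equivalence relation R' ⊆ R_φ, compatible with β on B
    (R' : Set ((X₁ × X₂) × (X₁ × X₂)))
    (hβR' : ∀ x ∈ B, ∀ x' ∈ B, ((x, x') ∈ R' ↔ (β x, β x') ∈ R')) :
    -- (1) γ is a well-defined homeomorphism from C onto C*
    (∃ e : C ≃ₜ Cstar, ∀ y : C, (e y : Y) = γ (y : Y)) ∧
    -- (2) γ respects S = {(y,y') ∈ R_ψ : (π(y),π(y')) ∈ R'} on C, and induces a
    -- bijection between S ∩ (C × C) and S ∩ (C* × C*)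
    (∀ y ∈ C, ∀ y' ∈ C,
      (((y, y') ∈ ψ.orbitRel ∧ (π y, π y') ∈ R') ↔
        ((γ y, γ y') ∈ ψ.orbitRel ∧ (π (γ y), π (γ y')) ∈ R'))) ∧
    Set.BijOn (Prod.map γ γ)
      ({p : Y × Y | p ∈ ψ.orbitRel ∧ (π p.1, π p.2) ∈ R'} ∩ C ×ˢ C)
      ({p : Y × Y | p ∈ ψ.orbitRel ∧ (π p.1, π p.2) ∈ R'} ∩ Cstar ×ˢ Cstar) := by
  subst hC hCstar hB hBstar
  set e := gammaPartialHomeomorph (p₂ := p₂) hπcont hπequiv hU₁.isClosed hU₂.isClosed hp₁U hφp₁U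
  -- the `if` in `hγ` and the one in `Z2System.shiftOn` use different `Decidable` instances
  obtain rfl : ⇑e = γ := funext fun y => by rw [hγ]; exact if_congr Iff.rfl rfl rfl
  have hS : ∀ y ∈ π ⁻¹' ({p₁} ×ˢ U₂ ∪ U₁ ×ˢ {p₂}), ∀ y' ∈ π ⁻¹' ({p₁} ×ˢ U₂ ∪ U₁ ×ˢ {p₂}),
      ((y, y') ∈ ψ.orbitRel ∧ (π y, π y') ∈ R') ↔
        ((e y, e y') ∈ ψ.orbitRel ∧ (π (e y), π (e y')) ∈ R') := fun y hy y' hy' =>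
    ψ.orbitRel_and_rel_shiftOn_iff (fun _ hx => map_shiftOn_of_mem_union hπequiv hβ hx) hβR'
      hy hy'
  exact ⟨⟨e.toHomeomorphSourceTarget, fun _ => rfl⟩, hS,
    e.invOn.bijOn_prodMap_inter e.mapsTo e.symm.mapsTo hS⟩

theorem gamma_homeomorphism_and_preserves_S
    {X₁ X₂ Y : Type} [TopologicalSpace X₁] [TopologicalSpace X₂] [TopologicalSpace Y]
    -- X₁, X₂ and Y are Cantor sets
    [Nonempty X₁] [CompactSpace X₁] [TopologicalSpace.MetrizableSpace X₁]
    [TotallyDisconnectedSpace X₁] (hX₁ : ∀ x : X₁, ¬ IsOpen ({x} : Set X₁))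
    [Nonempty X₂] [CompactSpace X₂] [TopologicalSpace.MetrizableSpace X₂]
    [TotallyDisconnectedSpace X₂] (hX₂ : ∀ x : X₂, ¬ IsOpen ({x} : Set X₂))
    [Nonempty Y] [CompactSpace Y] [TopologicalSpace.MetrizableSpace Y]
    [TotallyDisconnectedSpace Y] (hY : ∀ y : Y, ¬ IsOpen ({y} : Set Y))
    -- (X₁, φ₁) and (X₂, φ₂) are Cantor minimal ℤ-systems
    (φ₁ : Equiv.Perm X₁) (hφ₁ : IsHomeomorph ⇑φ₁)
    (hmin₁ : ∀ x : X₁, Dense (Set.range fun n : ℤ => (φ₁ ^ n) x))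
    (φ₂ : Equiv.Perm X₂) (hφ₂ : IsHomeomorph ⇑φ₂)
    (hmin₂ : ∀ x : X₂, Dense (Set.range fun n : ℤ => (φ₂ ^ n) x))
    -- (Y, ψ) is a Cantor minimal ℤ²-system and π a factor map onto (X₁ × X₂, φ)
    (ψ : Z2System Y)
    (π : Y → X₁ × X₂) (hπcont : Continuous π) (hπsurj : Function.Surjective π)
    (hπequiv : ∀ (a : ℤ × ℤ) (y : Y), π (ψ.act a y) = prodAct φ₁ φ₂ a (π y))
    -- the points pᵢ and the clopen sets Uᵢ
    (p₁ : X₁) (p₂ : X₂)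
    (U₁ : Set X₁) (hU₁ : IsClopen U₁) (hp₁U : p₁ ∉ U₁) (hφp₁U : φ₁ p₁ ∉ U₁)
    (U₂ : Set X₂) (hU₂ : IsClopen U₂) (hp₂U : p₂ ∉ U₂) (hφp₂U : φ₂ p₂ ∉ U₂)
    -- the sets B, B*, C = π⁻¹(B), C* = π⁻¹(B*)
    (B Bstar : Set (X₁ × X₂))
    (hB : B = ({p₁} : Set X₁) ×ˢ U₂ ∪ U₁ ×ˢ ({p₂} : Set X₂))
    (hBstar : Bstar = ({φ₁ p₁} : Set X₁) ×ˢ U₂ ∪ U₁ ×ˢ ({φ₂ p₂} : Set X₂))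
    (C Cstar : Set Y) (hC : C = π ⁻¹' B) (hCstar : Cstar = π ⁻¹' Bstar)
    -- the maps γ and β
    (γ : Y → Y)
    (hγ : ∀ y : Y, γ y = if π y ∈ ({p₁} : Set X₁) ×ˢ U₂ then ψ.act ((1, 0) : ℤ × ℤ) y
      else ψ.act ((0, 1) : ℤ × ℤ) y)
    (β : X₁ × X₂ → X₁ × X₂)
    (hβ : ∀ x : X₁ × X₂, β x = if x ∈ ({p₁} : Set X₁) ×ˢ U₂ then (φ₁ p₁, x.2)
      else (x.1, φ₂ p₂))
    -- the equivalence relation R' ⊆ R_φ, compatible with β on B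
    (R' : Set ((X₁ × X₂) × (X₁ × X₂)))
    (hR'sub : R' ⊆ {p | ∃ a : ℤ × ℤ, p.2 = prodAct φ₁ φ₂ a p.1})
    (hR'equiv : IsEquivSetRel R')
    (hβR' : ∀ x ∈ B, ∀ x' ∈ B, ((x, x') ∈ R' ↔ (β x, β x') ∈ R')) :
    -- (1) γ is a well-defined homeomorphism from C onto C*
    (∃ e : C ≃ₜ Cstar, ∀ y : C, (e y : Y) = γ (y : Y)) ∧
    -- (2) γ respects S = {(y,y') ∈ R_ψ : (π(y),π(y')) ∈ R'} on C, and induces a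
    -- bijection between S ∩ (C × C) and S ∩ (C* × C*)
    (∀ y ∈ C, ∀ y' ∈ C,
      (((y, y') ∈ ψ.orbitRel ∧ (π y, π y') ∈ R') ↔
        ((γ y, γ y') ∈ ψ.orbitRel ∧ (π (γ y), π (γ y')) ∈ R'))) ∧
    Set.BijOn (Prod.map γ γ)
      ({p : Y × Y | p ∈ ψ.orbitRel ∧ (π p.1, π p.2) ∈ R'} ∩ C ×ˢ C)
      ({p : Y × Y | p ∈ ψ.orbitRel ∧ (π p.1, π p.2) ∈ R'} ∩ Cstar ×ˢ Cstar) :=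
  gamma_homeomorphism_and_preserves_S_general φ₁ φ₂ ψ π hπcont hπequiv p₁ p₂ U₁ hU₁ hp₁U hφp₁U U₂
    hU₂ B Bstar hB hBstar C Cstar hC hCstar γ hγ β hβ R' hβR'
end
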